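/- arXiv:1009.2399 — 9 statements merged into one kernel-verified Lean document; each statement's English description precedes it below -/
import Mathlib

section
/- For m a natural number and a > -1 real, the integral of 1/(x^4 + 2ax^2 + 1)^(m+1) over x from 0 to infinity equals π/(2^(m+3/2) (a+1)^(m+1/2)) times P_m(a), where P_m(a) = 2^(-2m) * Σ_{k=0}^{m} 2^k * C(2m-2k, m-k) * C(m+k, k) * (a+1)^k. -/
/-!
Write `D = x⁴ + 2ax² + 1` and `c = 2(a + 1)`. The substitution `x ↦ 1/x` shows that the
integral of `D^{-(m+1)}` over `(0, ∞)` equals that of `x^{4m+2} D^{-(m+1)}`, so twice it is the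
integral of `(1 + x^{4m+2}) D^{-(m+1)}`. Now `D = x² ((x - 1/x)² + c)`, and
`(1 + x^{4m+2}) / (x^{2m} (1 + x²)) = F(x - 1/x)` for the Fibonacci polynomial
`F(u) = F_{2m+1}(u) = ∑ₖ C(m+k, 2k) u^{2k}`, so the substitution `u = x - 1/x`, which
maps `(0, ∞)` onto `ℝ` with `du = (1 + 1/x²) dx`, turns it into
`∫_ℝ F(u) (u² + c)^{-(m+1)} du`.
After scaling `u = √c v`, integration by parts gives the moments
`∫_ℝ v^{2k} (v² + 1)^{-(m+1)} = π C(2k, k) C(2m-2k, m-k) / (4^m C(m, k))`, and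
`C(m+k, 2k) C(2k, k) = C(m+k, k) C(m, k)` puts the sum in the stated form.
-/

open MeasureTheory Real Filter Set Topology

lemma sq_pow_le_sq_add_one_pow {k m : ℕ} (hk : k ≤ m) (v : ℝ) :
    (v ^ 2) ^ k ≤ (v ^ 2 + 1) ^ m :=
  (pow_le_pow_left₀ (sq_nonneg v) (le_add_of_nonneg_right zero_le_one) k).trans
    (pow_le_pow_right₀ (le_add_of_nonneg_left (sq_nonneg v)) hk)

lemma integrable_pow_div_sq_add_one_pow {k m : ℕ} (hk : k ≤ m) :
    Integrable fun v : ℝ => v ^ (2 * k) / (v ^ 2 + 1) ^ (m + 1) := by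
  refine integrable_inv_one_add_sq.mono'
    (Continuous.div (by fun_prop) (by fun_prop) fun v => by positivity).aestronglyMeasurable
    (Eventually.of_forall fun v => ?_)
  rw [pow_mul v 2 k, norm_of_nonneg (by positivity), pow_succ (v ^ 2 + 1) m, ← div_div,
    add_comm 1, ← one_div]
  gcongr
  exact (div_le_one (by positivity)).2 (sq_pow_le_sq_add_one_pow hk v)

lemma tendsto_pow_div_sq_add_one_pow_cocompact {k m : ℕ} (hk : k ≤ m) :
    Tendsto (fun v : ℝ => v ^ (2 * k + 1) / (v ^ 2 + 1) ^ (m + 1)) (cocompact ℝ) (𝓝 0) := by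
  refine squeeze_zero_norm (fun v => ?_)
    (tendsto_inv_atTop_zero.comp tendsto_norm_cocompact_atTop)
  rcases eq_or_ne v 0 with rfl | hv
  · simp
  have hpos : 0 < v ^ 2 + 1 := by positivity
  calc ‖v ^ (2 * k + 1) / (v ^ 2 + 1) ^ (m + 1)‖
      = ‖v‖⁻¹ * ((v ^ 2) ^ (k + 1) / (v ^ 2 + 1) ^ (m + 1)) := by
        rw [norm_div, norm_pow, norm_pow, norm_of_nonneg hpos.le, norm_eq_abs, ← sq_abs v,
          ← pow_mul]
        field_simp [abs_pos.2 hv]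
        ring
    _ ≤ ‖v‖⁻¹ * 1 := by
        gcongr
        exact (div_le_one (by positivity)).2 (sq_pow_le_sq_add_one_pow (by omega) v)
    _ = ‖v‖⁻¹ := mul_one _

lemma hasDerivAt_pow_div_sq_add_one_pow (k m : ℕ) (v : ℝ) :
    HasDerivAt (fun v : ℝ => v ^ (2 * k + 1) / (v ^ 2 + 1) ^ (m + 1))
      ((2 * k + 1) * (v ^ (2 * k) / (v ^ 2 + 1) ^ (m + 1))
        - (2 * m + 2) * (v ^ (2 * (k + 1)) / (v ^ 2 + 1) ^ (m + 1 + 1))) v := by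
  have hpos : 0 < v ^ 2 + 1 := by positivity
  refine ((hasDerivAt_pow (2 * k + 1) v).fun_div
    (((hasDerivAt_pow 2 v).add_const 1).fun_pow (m + 1)) (pow_pos hpos _).ne').congr_deriv ?_
  field_simp
  push_cast
  ring

noncomputable def evenMoment (k m : ℕ) : ℝ := ∫ v : ℝ, v ^ (2 * k) / (v ^ 2 + 1) ^ (m + 1)

lemma evenMoment_zero_zero : evenMoment 0 0 = π := by
  simp [evenMoment, add_comm _ (1 : ℝ), integral_univ_inv_one_add_sq]

lemma evenMoment_eq_add {k m : ℕ} (hk : k ≤ m) :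
    evenMoment k m = evenMoment k (m + 1) + evenMoment (k + 1) (m + 1) := by
  rw [evenMoment, evenMoment, evenMoment, ← integral_add
    (integrable_pow_div_sq_add_one_pow (by omega)) (integrable_pow_div_sq_add_one_pow (by omega))]
  congr 1 with v
  field_simp
  ring

lemma mul_evenMoment_succ_succ {k m : ℕ} (hk : k ≤ m) :
    (2 * m + 2) * evenMoment (k + 1) (m + 1) = (2 * k + 1) * evenMoment k m := by
  have h := integral_of_hasDerivAt_of_tendsto (hasDerivAt_pow_div_sq_add_one_pow k m)
    (((integrable_pow_div_sq_add_one_pow hk).const_mul _).sub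
      ((integrable_pow_div_sq_add_one_pow (by omega : k + 1 ≤ m + 1)).const_mul _))
    ((tendsto_pow_div_sq_add_one_pow_cocompact hk).mono_left atBot_le_cocompact)
    ((tendsto_pow_div_sq_add_one_pow_cocompact hk).mono_left atTop_le_cocompact)
  rw [integral_sub ((integrable_pow_div_sq_add_one_pow hk).const_mul _)
      ((integrable_pow_div_sq_add_one_pow (by omega : k + 1 ≤ m + 1)).const_mul _),
    integral_const_mul, integral_const_mul] at h
  rw [evenMoment, evenMoment]
  linarith

theorem evenMoment_eq {k m : ℕ} (hk : k ≤ m) :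
    evenMoment k m = π * k.centralBinom * (m - k).centralBinom / (4 ^ m * m.choose k) := by
  have hcb (n : ℕ) :
      ((n + 1).centralBinom : ℝ) = 2 * (2 * n + 1) * n.centralBinom / (n + 1) := by
    rw [eq_div_iff (by positivity)]
    exact_mod_cast (mul_comm _ _).trans (Nat.succ_mul_centralBinom_succ n)
  induction m generalizing k with
  | zero => simp [Nat.le_zero.1 hk, evenMoment_zero_zero]
  | succ m ih =>
    rcases k with _ | k
    · have hstep : evenMoment 0 (m + 1) = (2 * m + 1) / (2 * m + 2) * evenMoment 0 m := by
        have := mul_evenMoment_succ_succ (Nat.zero_le m)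
        rw [evenMoment_eq_add (Nat.zero_le m)] at this ⊢
        field_simp
        push_cast at this
        linarith
      rw [hstep, ih (Nat.zero_le m)]
      simp only [Nat.centralBinom_zero, Nat.sub_zero, Nat.choose_zero_right, hcb]
      field_simp
      ring
    · have hk' : k ≤ m := by omega
      have hstep : evenMoment (k + 1) (m + 1) = (2 * k + 1) / (2 * m + 2) * evenMoment k m := by
        rw [div_mul_eq_mul_div, eq_div_iff (by positivity), mul_comm]
        exact_mod_cast mul_evenMoment_succ_succ hk'
      have hchoose : ((m + 1).choose (k + 1) : ℝ) = (m + 1) * m.choose k / (k + 1) := by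
        rw [eq_div_iff (by positivity)]
        exact_mod_cast (Nat.add_one_mul_choose_eq m k).symm
      rw [hstep, ih hk', Nat.add_sub_add_right, hcb, hchoose]
      field_simp
      ring

lemma pow_div_sq_add_pow_eq {c : ℝ} (hc : 0 < c) (k m : ℕ) (u : ℝ) :
    u ^ (2 * k) / (u ^ 2 + c) ^ (m + 1)
      = c ^ k / c ^ (m + 1) * ((u / √c) ^ (2 * k) / ((u / √c) ^ 2 + 1) ^ (m + 1)) := by
  have hs : 0 < √c := sqrt_pos.2 hc
  generalize hs' : √c = s at hs
  obtain rfl : c = s ^ 2 := by rw [← hs', sq_sqrt hc.le]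
  rw [div_pow u s 2, div_add_one (by positivity), div_pow _ (s ^ 2), div_pow u s, ← pow_mul,
    ← pow_mul]
  field_simp

lemma integrable_pow_div_sq_add_pow {c : ℝ} (hc : 0 < c) {k m : ℕ} (hk : k ≤ m) :
    Integrable fun u : ℝ => u ^ (2 * k) / (u ^ 2 + c) ^ (m + 1) := by
  simp_rw [pow_div_sq_add_pow_eq hc]
  exact ((integrable_pow_div_sq_add_one_pow hk).comp_div (sqrt_pos.2 hc).ne').const_mul _

lemma integral_pow_div_sq_add_pow {c : ℝ} (hc : 0 < c) (k m : ℕ) :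
    ∫ u : ℝ, u ^ (2 * k) / (u ^ 2 + c) ^ (m + 1)
      = c ^ k / c ^ ((m : ℝ) + 1 / 2) * evenMoment k m := by
  have hs : 0 < √c := sqrt_pos.2 hc
  simp_rw [pow_div_sq_add_pow_eq hc]
  rw [integral_const_mul, Measure.integral_comp_div (fun v => v ^ (2 * k) / (v ^ 2 + 1) ^ (m + 1)),
    smul_eq_mul, abs_of_pos hs, ← evenMoment, rpow_add hc, rpow_natCast, ← sqrt_eq_rpow,
    pow_succ, ← mul_self_sqrt hc.le, ← mul_assoc]
  field_simp
  rw [sqrt_sq hs.le]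

section

open Finset

-- The Fibonacci polynomial `F_{2m+1}`, where `F_1 = 1`, `F_2 = u`, `F_{n+2} = u F_{n+1} + F_n`.
noncomputable def oddFibPoly (m : ℕ) (u : ℝ) : ℝ :=
  ∑ k ∈ range (m + 1), ((m + k).choose (2 * k) : ℝ) * u ^ (2 * k)

lemma oddFibPoly_eq_sum_range {m N : ℕ} (h : m + 1 ≤ N) (u : ℝ) :
    oddFibPoly m u = ∑ k ∈ range N, ((m + k).choose (2 * k) : ℝ) * u ^ (2 * k) :=
  sum_subset (range_subset_range.2 h) fun k _ hk => by
    rw [Nat.choose_eq_zero_of_lt (by rw [Finset.mem_range] at hk; omega), Nat.cast_zero, zero_mul]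

lemma choose_add_two_add_choose (n j : ℕ) :
    (n + 2).choose (2 * j + 2) + n.choose (2 * j + 2)
      = n.choose (2 * j) + 2 * (n + 1).choose (2 * j + 2) := by
  have h1 : (n + 2).choose (2 * j + 2) = (n + 1).choose (2 * j + 1) + (n + 1).choose (2 * j + 2) :=
    Nat.choose_succ_succ' _ _
  have h2 : (n + 1).choose (2 * j + 1) = n.choose (2 * j) + n.choose (2 * j + 1) :=
    Nat.choose_succ_succ' _ _
  have h3 : (n + 1).choose (2 * j + 2) = n.choose (2 * j + 1) + n.choose (2 * j + 2) :=
    Nat.choose_succ_succ' _ _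
  omega

lemma oddFibPoly_add_two (m : ℕ) (u : ℝ) :
    oddFibPoly (m + 2) u = (u ^ 2 + 2) * oddFibPoly (m + 1) u - oddFibPoly m u := by
  suffices oddFibPoly (m + 2) u + oddFibPoly m u - 2 * oddFibPoly (m + 1) u
      = u ^ 2 * oddFibPoly (m + 1) u by linarith
  conv_rhs => rw [oddFibPoly, mul_sum]
  rw [oddFibPoly_eq_sum_range (N := m + 3) le_rfl,
    oddFibPoly_eq_sum_range (m := m) (N := m + 3) (by omega),
    oddFibPoly_eq_sum_range (m := m + 1) (N := m + 3) (by omega), mul_sum, ← sum_add_distrib,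
    ← sum_sub_distrib, sum_range_succ']
  simp only [mul_zero, Nat.choose_zero_right, pow_zero, Nat.cast_one, mul_one,
    one_add_one_eq_two, sub_self, add_zero]
  refine sum_congr rfl fun k _ => ?_
  have h : ((m + 1 + k + 2).choose (2 * k + 2) : ℝ) + (m + 1 + k).choose (2 * k + 2)
      = (m + 1 + k).choose (2 * k) + 2 * (m + 1 + k + 1).choose (2 * k + 2) := by
    exact_mod_cast choose_add_two_add_choose (m + 1 + k) k
  rw [show m + 2 + (k + 1) = m + 1 + k + 2 by omega, show m + (k + 1) = m + 1 + k by omega,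
    show m + 1 + (k + 1) = m + 1 + k + 1 by omega, show 2 * (k + 1) = 2 * k + 2 by omega, pow_add]
  linear_combination u ^ (2 * k) * u ^ 2 * h

lemma mul_oddFibPoly_sub_inv (m : ℕ) {x : ℝ} (hx : x ≠ 0) :
    (x ^ 2 + 1) * x ^ (2 * m) * oddFibPoly m (x - x⁻¹) = x ^ (4 * m + 2) + 1 := by
  have hu : x ^ 2 * ((x - x⁻¹) ^ 2 + 2) = x ^ 4 + 1 := by field_simp; ring
  induction m using Nat.twoStepInduction with
  | zero => simp [oddFibPoly]
  | one =>
    rw [show oddFibPoly 1 (x - x⁻¹) = 1 + (x - x⁻¹) ^ 2 by simp [oddFibPoly, sum_range_succ]]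
    field_simp
    ring
  | more m h0 h1 =>
    rw [oddFibPoly_add_two]
    linear_combination x ^ 2 * ((x - x⁻¹) ^ 2 + 2) * h1 - x ^ 4 * h0 + (x ^ (4 * m + 6) + 1) * hu

lemma choose_two_mul_mul_centralBinom (m k : ℕ) :
    (m + k).choose (2 * k) * k.centralBinom = (m + k).choose k * m.choose k := by
  rw [Nat.centralBinom_eq_two_mul_choose, Nat.choose_mul (by omega), Nat.add_sub_cancel,
    two_mul, Nat.add_sub_cancel]

lemma oddFibPoly_div_eq_sum (m : ℕ) (c u : ℝ) :
    oddFibPoly m u / (u ^ 2 + c) ^ (m + 1)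
      = ∑ k ∈ range (m + 1),
          ((m + k).choose (2 * k) : ℝ) * (u ^ (2 * k) / (u ^ 2 + c) ^ (m + 1)) := by
  simp only [oddFibPoly, sum_div, mul_div_assoc]

lemma integrable_oddFibPoly_div {c : ℝ} (hc : 0 < c) (m : ℕ) :
    Integrable fun u => oddFibPoly m u / (u ^ 2 + c) ^ (m + 1) := by
  simp_rw [oddFibPoly_div_eq_sum]
  exact integrable_finsetSum _ fun k hk =>
    (integrable_pow_div_sq_add_pow hc (Nat.lt_succ_iff.1 (mem_range.1 hk))).const_mul _

theorem integral_oddFibPoly_div {c : ℝ} (hc : 0 < c) (m : ℕ) :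
    ∫ u, oddFibPoly m u / (u ^ 2 + c) ^ (m + 1) = π / (4 ^ m * c ^ ((m : ℝ) + 1 / 2)) *
      ∑ k ∈ range (m + 1), ((m + k).choose k : ℝ) * (m - k).centralBinom * c ^ k := by
  simp_rw [oddFibPoly_div_eq_sum]
  rw [integral_finsetSum _ fun k hk =>
    (integrable_pow_div_sq_add_pow hc (Nat.lt_succ_iff.1 (mem_range.1 hk))).const_mul _, mul_sum]
  refine sum_congr rfl fun k hk => ?_
  have hk : k ≤ m := Nat.lt_succ_iff.1 (mem_range.1 hk)
  have h : ((m + k).choose (2 * k) : ℝ) * k.centralBinom = (m + k).choose k * m.choose k := by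
    exact_mod_cast choose_two_mul_mul_centralBinom m k
  have hmk : (m.choose k : ℝ) ≠ 0 := by exact_mod_cast (Nat.choose_pos hk).ne'
  rw [integral_const_mul, integral_pow_div_sq_add_pow hc, evenMoment_eq hk]
  field_simp
  linear_combination ((m - k).centralBinom : ℝ) * h

end

lemma integral_Ioi_inv_sq_mul_comp_inv (g : ℝ → ℝ) :
    ∫ x in Ioi 0, (x ^ 2)⁻¹ * g x⁻¹ = ∫ x in Ioi 0, g x := by
  rw [← integral_comp_rpow_Ioi g (p := -1) (by norm_num)]
  refine setIntegral_congr_fun measurableSet_Ioi fun x hx => ?_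
  simp only [rpow_neg_one, smul_eq_mul, abs_neg, abs_one, one_mul]
  rw [show (-1 : ℝ) - 1 = -(2 : ℕ) by norm_num, rpow_neg (le_of_lt hx), rpow_natCast]

lemma image_sub_inv_Ioi : (fun x : ℝ => x - x⁻¹) '' Ioi 0 = univ := by
  refine eq_univ_of_forall fun u => ?_
  have habs : |u| < √(u ^ 2 + 4) := by
    rw [← sqrt_sq_eq_abs]
    exact sqrt_lt_sqrt (sq_nonneg u) (by linarith)
  have hpos : 0 < u + √(u ^ 2 + 4) := by linarith [neg_abs_le u]
  refine ⟨(u + √(u ^ 2 + 4)) / 2, half_pos hpos, ?_⟩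
  have hs := sq_sqrt (by positivity : (0 : ℝ) ≤ u ^ 2 + 4)
  field_simp
  linear_combination hs

lemma strictMonoOn_sub_inv_Ioi : StrictMonoOn (fun x : ℝ => x - x⁻¹) (Ioi 0) :=
  fun _ hx _ hy hxy => sub_lt_sub hxy ((inv_lt_inv₀ hy hx).2 hxy)

lemma hasDerivWithinAt_sub_inv {x : ℝ} (hx : x ∈ Ioi 0) :
    HasDerivWithinAt (fun x : ℝ => x - x⁻¹) (1 + (x ^ 2)⁻¹) (Ioi 0) x :=
  ((hasDerivAt_id x).sub (hasDerivAt_inv (ne_of_gt hx))).hasDerivWithinAt.congr_deriv (by ring)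

lemma integral_Ioi_comp_sub_inv (h : ℝ → ℝ) :
    ∫ x in Ioi 0, (1 + (x ^ 2)⁻¹) * h (x - x⁻¹) = ∫ u, h u := by
  rw [← setIntegral_univ (f := h) (μ := volume), ← image_sub_inv_Ioi,
    integral_image_eq_integral_abs_deriv_smul
    measurableSet_Ioi (fun x hx => hasDerivWithinAt_sub_inv hx) strictMonoOn_sub_inv_Ioi.injOn]
  refine setIntegral_congr_fun measurableSet_Ioi fun x _ => ?_
  rw [smul_eq_mul, abs_of_pos (by positivity)]

lemma integrableOn_Ioi_comp_sub_inv_iff (h : ℝ → ℝ) :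
    IntegrableOn (fun x => (1 + (x ^ 2)⁻¹) * h (x - x⁻¹)) (Ioi 0) ↔ Integrable h := by
  rw [← integrableOn_univ (f := h), ← image_sub_inv_Ioi,
    integrableOn_image_iff_integrableOn_abs_deriv_smul
    measurableSet_Ioi (fun x hx => hasDerivWithinAt_sub_inv hx) strictMonoOn_sub_inv_Ioi.injOn]
  refine integrableOn_congr_fun (fun x _ => ?_) measurableSet_Ioi
  rw [smul_eq_mul, abs_of_pos (by positivity)]

lemma quartic_pos {a : ℝ} (ha : -1 < a) (x : ℝ) : 0 < x ^ 4 + 2 * a * x ^ 2 + 1 := by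
  nlinarith [sq_nonneg (x ^ 2 - 1), mul_nonneg (by linarith : 0 ≤ a + 1) (sq_nonneg x)]

lemma inv_sq_mul_one_div_quartic_inv (a : ℝ) (m : ℕ) {x : ℝ} (hx : x ≠ 0) :
    (x ^ 2)⁻¹ * (1 / (x⁻¹ ^ 4 + 2 * a * x⁻¹ ^ 2 + 1) ^ (m + 1))
      = x ^ (4 * m + 2) / (x ^ 4 + 2 * a * x ^ 2 + 1) ^ (m + 1) := by
  rw [show x⁻¹ ^ 4 + 2 * a * x⁻¹ ^ 2 + 1 = (x ^ 4 + 2 * a * x ^ 2 + 1) / x ^ 4 by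
      field_simp; ring,
    div_pow, one_div_div, ← pow_mul]
  field_simp
  ring

lemma one_add_inv_sq_mul_oddFibPoly_div (a : ℝ) (m : ℕ) {x : ℝ} (hx : x ≠ 0) :
    (1 + (x ^ 2)⁻¹) * (oddFibPoly m (x - x⁻¹) / ((x - x⁻¹) ^ 2 + 2 * (a + 1)) ^ (m + 1))
      = (1 + x ^ (4 * m + 2)) / (x ^ 4 + 2 * a * x ^ 2 + 1) ^ (m + 1) := by
  rw [show (x - x⁻¹) ^ 2 + 2 * (a + 1) = (x ^ 4 + 2 * a * x ^ 2 + 1) / x ^ 2 by field_simp; ring,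
    div_pow, div_div_eq_mul_div, ← mul_div_assoc, add_comm 1 (x ^ _),
    ← mul_oddFibPoly_sub_inv m hx]
  congr 1
  field_simp
  ring

theorem two_mul_integral_one_div_quartic {a : ℝ} (ha : -1 < a) (m : ℕ) :
    2 * ∫ x in Ioi 0, 1 / (x ^ 4 + 2 * a * x ^ 2 + 1) ^ (m + 1)
      = ∫ u, oddFibPoly m u / (u ^ 2 + 2 * (a + 1)) ^ (m + 1) := by
  set f : ℝ → ℝ := fun x => 1 / (x ^ 4 + 2 * a * x ^ 2 + 1) ^ (m + 1)
  set g : ℝ → ℝ := fun x => x ^ (4 * m + 2) / (x ^ 4 + 2 * a * x ^ 2 + 1) ^ (m + 1)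
  have hD := quartic_pos ha
  have hf_cont : Continuous f := continuous_const.div (by fun_prop) fun x => (pow_pos (hD x) _).ne'
  have hg_cont : Continuous g :=
    (continuous_pow _).div (by fun_prop) fun x => (pow_pos (hD x) _).ne'
  have hf_nonneg (x : ℝ) : 0 ≤ f x := one_div_nonneg.2 (pow_pos (hD x) _).le
  have hg_nonneg (x : ℝ) : 0 ≤ g x :=
    div_nonneg (Even.pow_nonneg ⟨2 * m + 1, by ring⟩ x) (pow_pos (hD x) _).le
  have hfg : EqOn (fun x => (1 + (x ^ 2)⁻¹) *
      (oddFibPoly m (x - x⁻¹) / ((x - x⁻¹) ^ 2 + 2 * (a + 1)) ^ (m + 1))) (f + g) (Ioi 0) :=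
    fun x hx => (one_add_inv_sq_mul_oddFibPoly_div a m (ne_of_gt hx)).trans (add_div _ _ _)
  have hfg_int : IntegrableOn (f + g) (Ioi 0) :=
    ((integrableOn_Ioi_comp_sub_inv_iff _).2
      (integrable_oddFibPoly_div (by linarith) m)).congr_fun hfg measurableSet_Ioi
  have hf_int : IntegrableOn f (Ioi 0) := hfg_int.mono' hf_cont.aestronglyMeasurable
    (Eventually.of_forall fun x => by simpa [abs_of_nonneg (hf_nonneg x)] using hg_nonneg x)
  have hg_int : IntegrableOn g (Ioi 0) := hfg_int.mono' hg_cont.aestronglyMeasurable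
    (Eventually.of_forall fun x => by simpa [abs_of_nonneg (hg_nonneg x)] using hf_nonneg x)
  have hgf : ∫ x in Ioi 0, g x = ∫ x in Ioi 0, f x := by
    rw [← integral_Ioi_inv_sq_mul_comp_inv f]
    exact setIntegral_congr_fun measurableSet_Ioi fun x hx =>
      (inv_sq_mul_one_div_quartic_inv a m (ne_of_gt hx)).symm
  calc 2 * ∫ x in Ioi 0, f x = (∫ x in Ioi 0, f x) + ∫ x in Ioi 0, g x := by rw [hgf, two_mul]
    _ = ∫ x in Ioi 0, (f + g) x := (integral_add hf_int hg_int).symm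
    _ = _ := (setIntegral_congr_fun measurableSet_Ioi hfg).symm
    _ = _ := integral_Ioi_comp_sub_inv fun u => oddFibPoly m u / (u ^ 2 + 2 * (a + 1)) ^ (m + 1)

theorem quartic_integral_eval (m : ℕ) (a : ℝ) (ha : -1 < a) :
    ∫ x in Set.Ioi (0:ℝ), 1 / (x^4 + 2*a*x^2 + 1)^(m+1) =
      π / ((2:ℝ) ^ ((m:ℝ) + 3/2) * (a+1) ^ ((m:ℝ) + 1/2)) *
        ((2:ℝ) ^ (-(2*(m:ℤ))) *
          ∑ k ∈ Finset.range (m+1),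
            (2:ℝ)^k * (Nat.choose (2*m - 2*k) (m - k)) * (Nat.choose (m+k) k) * (a+1)^k) := by
  have ha' : 0 < a + 1 := by linarith
  have h := two_mul_integral_one_div_quartic ha m
  rw [integral_oddFibPoly_div (by positivity), mul_rpow zero_le_two ha'.le] at h
  have hsum : ∑ k ∈ Finset.range (m + 1),
        (2 : ℝ) ^ k * (2 * m - 2 * k).choose (m - k) * (m + k).choose k * (a + 1) ^ k
      = ∑ k ∈ Finset.range (m + 1),
          ((m + k).choose k : ℝ) * (m - k).centralBinom * (2 * (a + 1)) ^ k :=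
    Finset.sum_congr rfl fun k _ => by
      rw [← Nat.mul_sub, ← Nat.centralBinom_eq_two_mul_choose, mul_pow]
      ring
  have h2 : (2 : ℝ) ^ ((m : ℝ) + 3 / 2) = 2 * 2 ^ ((m : ℝ) + 1 / 2) := by
    rw [show (m : ℝ) + 3 / 2 = m + 1 / 2 + 1 by ring, rpow_add_one two_ne_zero, mul_comm]
  have h4 : (2 : ℝ) ^ (-(2 * (m : ℤ))) = (4 ^ m)⁻¹ := by
    rw [zpow_neg, zpow_mul, zpow_natCast]
    norm_num
  rw [hsum, h2, h4]
  field_simp at h ⊢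
  linear_combination h
end

section
/- For complex numbers A_1, ..., A_n (n ≥ 1) with positive real parts, 1/(A_1 ⋯ A_n) = (n-1)! * ∫ over the simplex {(x_1,...,x_n) ∈ [0,1]^n : x_1 + ... + x_n = 1} of dσ / (x_1 A_1 + ... + x_n A_n)^n, where dσ is the measure obtained by integrating over x_1,...,x_{n-1} with x_n = 1 - x_1 - ... - x_{n-1}. -/
/-!
Induction on `n`. Slicing the solid simplex `Δₙ₊₁ = {x ≥ 0, ∑ xᵢ ≤ 1}` by its first coordinate
`u ∈ (0, 1)` gives slices `(1 - u) • Δₙ`, so after rescaling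
`∫_{Δₙ₊₁} f = ∫_{y ∈ Δₙ} ∫₀¹ (1 - u)ⁿ f(u, (1 - u) y) du dy`.
At the point `(u, (1 - u) y)` the denominator is `u A₀ + (1 - u) L(y)`, where `L` is the
denominator built from `A₁, …, Aₙ₊₁`, and the inner integral is elementary:
`∫₀¹ (1 - u)ⁿ / (u a + (1 - u) b)ⁿ⁺² du = 1 / ((n + 1) a bⁿ⁺¹)`, with antiderivative
`-((1 - u) / (u a + (1 - u) b))ⁿ⁺¹ / ((n + 1) a)`. The induction hypothesis for `L` finishes.
All denominators are convex combinations of the `Aᵢ`, hence lie in the open right half-plane.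
-/

open MeasureTheory Set Pointwise

def solidSimplex (n : ℕ) : Set (Fin n → ℝ) := {x | (∀ i, 0 ≤ x i) ∧ ∑ i, x i ≤ 1}

def barycentricComb {n : ℕ} (A : Fin (n + 1) → ℂ) (x : Fin n → ℝ) : ℂ :=
  ∑ i, (x i : ℂ) * A i.castSucc + (1 - ∑ i, (x i : ℂ)) * A (Fin.last n)

section solidSimplex

variable {n : ℕ}

theorem isClosed_solidSimplex (n : ℕ) : IsClosed (solidSimplex n) := by
  rw [solidSimplex, ofPred_and, ofPred_forall]
  exact (isClosed_iInter fun i => isClosed_le continuous_const (continuous_apply i)).inter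
    (isClosed_le (continuous_finsetSum _ fun i _ => continuous_apply i) continuous_const)

theorem isCompact_solidSimplex (n : ℕ) : IsCompact (solidSimplex n) :=
  (isCompact_univ_pi fun _ => isCompact_Icc).of_isClosed_subset (isClosed_solidSimplex n)
    fun _ hx i _ =>
      ⟨hx.1 i, (Finset.single_le_sum (fun j _ => hx.1 j) (Finset.mem_univ i)).trans hx.2⟩

theorem measurableSet_solidSimplex (n : ℕ) : MeasurableSet (solidSimplex n) :=
  (isClosed_solidSimplex n).measurableSet

theorem cons_mem_solidSimplex_iff {u : ℝ} {y : Fin n → ℝ} :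
    Fin.cons u y ∈ solidSimplex (n + 1) ↔ 0 ≤ u ∧ (∀ i, 0 ≤ y i) ∧ ∑ i, y i ≤ 1 - u := by
  simp only [solidSimplex, mem_ofPred_eq, Fin.forall_fin_succ, Fin.sum_univ_succ, Fin.cons_zero,
    Fin.cons_succ, and_assoc, le_sub_iff_add_le']

theorem mem_smul_solidSimplex_iff {c : ℝ} (hc : 0 < c) {y : Fin n → ℝ} :
    y ∈ c • solidSimplex n ↔ (∀ i, 0 ≤ y i) ∧ ∑ i, y i ≤ c := by
  simp only [mem_smul_set_iff_inv_smul_mem₀ hc.ne', solidSimplex, mem_ofPred_eq, Pi.smul_apply,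
    smul_eq_mul, ← Finset.mul_sum, inv_mul_le_iff₀ hc, mul_one,
    mul_nonneg_iff_of_pos_left (inv_pos.2 hc)]

theorem cons_smul_mem_solidSimplex {u : ℝ} (hu : u ∈ Icc (0 : ℝ) 1) {y : Fin n → ℝ}
    (hy : y ∈ solidSimplex n) : Fin.cons u ((1 - u) • y) ∈ solidSimplex (n + 1) := by
  have h1u : 0 ≤ 1 - u := sub_nonneg.2 hu.2
  refine cons_mem_solidSimplex_iff.2 ⟨hu.1, fun i => mul_nonneg h1u (hy.1 i), ?_⟩
  simpa [← Finset.mul_sum] using mul_le_of_le_one_right h1u hy.2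

end solidSimplex

section slicing

variable {E : Type*} [NormedAddCommGroup E] [NormedSpace ℝ E] {n : ℕ}

theorem integral_fin_succ_eq_integral_cons {f : (Fin (n + 1) → ℝ) → E} (hf : Integrable f) :
    ∫ x, f x = ∫ u, ∫ y : Fin n → ℝ, f (Fin.cons u y) := by
  let φ := (MeasurableEquiv.piFinSuccAbove (fun _ : Fin (n + 1) => ℝ) 0).symm
  have hφ : MeasurePreserving φ := (volume_preserving_piFinSuccAbove _ 0).symm
  have hfφ : Integrable (fun p => f (φ p)) (volume.prod volume) :=
    hφ.integrable_comp_of_integrable hf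
  rw [← hφ.integral_comp' f, Measure.volume_eq_prod, integral_prod _ hfφ]
  simp only [MeasurableEquiv.piFinSuccAbove_symm_apply, Fin.insertNthEquiv_zero, φ]
  rfl

theorem integral_indicator_solidSimplex_cons (f : (Fin (n + 1) → ℝ) → E) {u : ℝ}
    (hu : u ∈ Ioo (0 : ℝ) 1) :
    ∫ y : Fin n → ℝ, (solidSimplex (n + 1)).indicator f (Fin.cons u y) =
      (1 - u) ^ n • ∫ y in solidSimplex n, f (Fin.cons u ((1 - u) • y)) := by
  have hu1 : 0 < 1 - u := sub_pos.2 hu.2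
  have hslice : ∀ y : Fin n → ℝ, (solidSimplex (n + 1)).indicator f (Fin.cons u y) =
      ((1 - u) • solidSimplex n).indicator (fun y => f (Fin.cons u y)) y := fun y => by
    simp only [indicator, cons_mem_solidSimplex_iff, mem_smul_solidSimplex_iff hu1, hu.1.le,
      true_and]
  have hscale := Measure.setIntegral_comp_smul_of_pos volume (fun y => f (Fin.cons u y))
    (solidSimplex n) hu1
  rw [integral_congr_ae (.of_forall hslice),
    integral_indicator ((isCompact_solidSimplex n).smul _).isClosed.measurableSet, hscale,
    Module.finrank_fin_fun, smul_inv_smul₀ (pow_ne_zero _ hu1.ne')]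

theorem setIntegral_solidSimplex_succ [CompleteSpace E] {f : (Fin (n + 1) → ℝ) → E}
    (hf : ContinuousOn f (solidSimplex (n + 1))) :
    ∫ x in solidSimplex (n + 1), f x =
      ∫ y in solidSimplex n, ∫ u in (0 : ℝ)..1, (1 - u) ^ n • f (Fin.cons u ((1 - u) • y)) := by
  set g : ℝ × (Fin n → ℝ) → E := fun p => (1 - p.1) ^ n • f (Fin.cons p.1 ((1 - p.1) • p.2))
  have hg : ContinuousOn g (Icc 0 1 ×ˢ solidSimplex n) :=
    ((continuousOn_const.sub continuousOn_fst).pow n).smul <| hf.comp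
      (Continuous.finCons (A := fun _ => ℝ) continuous_fst
        ((continuous_const.sub continuous_fst).smul continuous_snd)).continuousOn
      fun p hp => cons_smul_mem_solidSimplex hp.1 hp.2
  have hg_int :
      Integrable g ((volume.restrict (Ioo 0 1)).prod (volume.restrict (solidSimplex n))) := by
    rw [Measure.prod_restrict, ← Measure.volume_eq_prod]
    exact (hg.integrableOn_compact (isCompact_Icc.prod (isCompact_solidSimplex n))).mono_set
      (prod_mono Ioo_subset_Icc_self subset_rfl)
  have hslice_empty : ∀ u ∉ Icc (0 : ℝ) 1,
      ∫ y : Fin n → ℝ, (solidSimplex (n + 1)).indicator f (Fin.cons u y) = 0 := by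
    intro u hu
    refine integral_eq_zero_of_ae (.of_forall fun y => indicator_of_notMem (fun hy => hu ?_) f)
    obtain ⟨hu0, hy0, hsum⟩ := cons_mem_solidSimplex_iff.1 hy
    exact ⟨hu0, by linarith [Finset.sum_nonneg fun i (_ : i ∈ Finset.univ) => hy0 i]⟩
  calc ∫ x in solidSimplex (n + 1), f x
      = ∫ u, ∫ y : Fin n → ℝ, (solidSimplex (n + 1)).indicator f (Fin.cons u y) := by
        rw [← integral_indicator (measurableSet_solidSimplex _)]
        exact integral_fin_succ_eq_integral_cons
          ((hf.integrableOn_compact (isCompact_solidSimplex _)).integrable_indicator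
            (measurableSet_solidSimplex _))
    _ = ∫ u in Ioo 0 1, (1 - u) ^ n • ∫ y in solidSimplex n, f (Fin.cons u ((1 - u) • y)) := by
        rw [← setIntegral_eq_integral_of_forall_compl_eq_zero hslice_empty,
          integral_Icc_eq_integral_Ioo]
        exact setIntegral_congr_fun measurableSet_Ioo
          fun u hu => integral_indicator_solidSimplex_cons f hu
    _ = ∫ y in solidSimplex n, ∫ u in Ioo 0 1, g (u, y) := by
        simp_rw [g, ← integral_smul]
        exact integral_integral_swap hg_int
    _ = _ := by
        simp only [g, intervalIntegral.integral_of_le zero_le_one, integral_Ioc_eq_integral_Ioo]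

end slicing

section barycentricComb

variable {n : ℕ}

theorem continuous_barycentricComb (A : Fin (n + 1) → ℂ) : Continuous (barycentricComb A) := by
  unfold barycentricComb
  fun_prop

theorem barycentricComb_eq_sum_smul (A : Fin (n + 1) → ℂ) (x : Fin n → ℝ) :
    barycentricComb A x = ∑ i, Fin.snoc (α := fun _ => ℝ) x (1 - ∑ j, x j) i • A i := by
  simp [barycentricComb, Fin.sum_univ_castSucc, Complex.real_smul]

theorem re_barycentricComb_pos {A : Fin (n + 1) → ℂ} (hA : ∀ i, 0 < (A i).re) {x : Fin n → ℝ}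
    (hx : x ∈ solidSimplex n) : 0 < (barycentricComb A x).re := by
  rw [barycentricComb_eq_sum_smul]
  refine (convex_halfSpace_re_gt 0).sum_mem (fun i _ => ?_) ?_ fun i _ => hA i
  · induction i using Fin.lastCases <;> simp [hx.1, hx.2]
  · simp [Fin.sum_univ_castSucc]

theorem barycentricComb_cons_smul (A : Fin (n + 2) → ℂ) (u : ℝ) (y : Fin n → ℝ) :
    barycentricComb A (Fin.cons u ((1 - u) • y)) =
      u * A 0 + (1 - u) * barycentricComb (Fin.tail A) y := by
  simp only [barycentricComb, Fin.sum_univ_succ, Fin.cons_zero, Fin.cons_succ, Fin.tail,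
    Pi.smul_apply, smul_eq_mul, Complex.ofReal_mul, Fin.castSucc_zero, Fin.succ_castSucc,
    Fin.succ_last, mul_assoc, ← Finset.mul_sum]
  push_cast
  ring

end barycentricComb

theorem re_convexComb_pos {a b : ℂ} (ha : 0 < a.re) (hb : 0 < b.re) {u : ℝ}
    (hu : u ∈ Icc (0 : ℝ) 1) : 0 < ((u : ℂ) * a + (1 - u) * b).re := by
  simpa [Complex.real_smul] using
    (convex_halfSpace_re_gt 0) ha hb hu.1 (sub_nonneg.2 hu.2) (add_sub_cancel u 1)

theorem hasDerivAt_one_sub_div_pow {a b : ℂ} (n : ℕ) {u : ℝ}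
    (hu : (u : ℂ) * a + (1 - u) * b ≠ 0) :
    HasDerivAt (fun v : ℝ => ((1 - v) / (v * a + (1 - v) * b)) ^ (n + 1))
      (-((n + 1) * a * (1 - u) ^ n / ((u : ℂ) * a + (1 - u) * b) ^ (n + 2))) u := by
  have hz : HasDerivAt (fun z : ℂ => z) 1 u := hasDerivAt_id' _
  have hq := (hz.const_sub 1).fun_div ((hz.mul_const a).fun_add ((hz.const_sub 1).mul_const b)) hu
  refine ((hq.fun_pow (n + 1)).comp_ofReal).congr_deriv ?_
  rw [add_tsub_cancel_right, div_pow]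
  field_simp
  push_cast
  ring

theorem integral_one_sub_pow_div_pow {a b : ℂ} (n : ℕ)
    (h : ∀ u ∈ Icc (0 : ℝ) 1, (u : ℂ) * a + (1 - u) * b ≠ 0) :
    ∫ u in (0 : ℝ)..1, (1 - u : ℂ) ^ n / (u * a + (1 - u) * b) ^ (n + 2) =
      1 / ((n + 1) * a * b ^ (n + 1)) := by
  have ha : a ≠ 0 := by simpa using h 1 (right_mem_Icc.2 zero_le_one)
  have hb : b ≠ 0 := by simpa using h 0 (left_mem_Icc.2 zero_le_one)
  have hn : (n + 1 : ℂ) ≠ 0 := Nat.cast_add_one_ne_zero n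
  rw [← uIcc_of_le zero_le_one] at h
  rw [intervalIntegral.integral_eq_sub_of_hasDerivAt
    (f := fun v : ℝ => -((1 - v) / (v * a + (1 - v) * b)) ^ (n + 1) / ((n + 1) * a))]
  · simp [field]
  · intro u hu
    refine ((hasDerivAt_one_sub_div_pow n (h u hu)).fun_neg.div_const _).congr_deriv ?_
    field_simp
  · exact ContinuousOn.intervalIntegrable (ContinuousOn.div (by fun_prop) (by fun_prop)
      fun u hu => pow_ne_zero _ (h u hu))

theorem integral_one_div_barycentricComb_pow_succ {n : ℕ} {A : Fin (n + 2) → ℂ}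
    (hA : ∀ i, 0 < (A i).re) :
    ∫ x in solidSimplex (n + 1), 1 / barycentricComb A x ^ (n + 2) =
      1 / ((n + 1) * A 0) *
        ∫ y in solidSimplex n, 1 / barycentricComb (Fin.tail A) y ^ (n + 1) := by
  have hcont : ContinuousOn (fun x => 1 / barycentricComb A x ^ (n + 2)) (solidSimplex (n + 1)) :=
    continuousOn_const.div ((continuous_barycentricComb A).pow _).continuousOn
      fun x hx => pow_ne_zero _ (Complex.ne_zero_of_re_pos (re_barycentricComb_pos hA hx))
  rw [setIntegral_solidSimplex_succ hcont, ← integral_const_mul]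
  refine setIntegral_congr_fun (measurableSet_solidSimplex n) fun y hy => ?_
  have hL := re_barycentricComb_pos (A := Fin.tail A) (fun i => hA i.succ) hy
  simp only [barycentricComb_cons_smul, Complex.real_smul, Complex.ofReal_pow, Complex.ofReal_sub,
    Complex.ofReal_one, mul_one_div]
  rw [integral_one_sub_pow_div_pow n
    fun u hu => Complex.ne_zero_of_re_pos (re_convexComb_pos (hA 0) hL hu)]
  field_simp

theorem schwinger_parametrization (n : ℕ) (A : Fin (n+1) → ℂ)
    (hA : ∀ i, 0 < (A i).re) :
    1 / (∏ i, A i) =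
      (n.factorial : ℂ) *
        ∫ x in {x : Fin n → ℝ | (∀ i, 0 ≤ x i) ∧ ∑ i, x i ≤ 1},
          1 / ((∑ i : Fin n, (x i : ℂ) * A i.castSucc
                + (1 - ∑ i : Fin n, (x i : ℂ)) * A (Fin.last n)) ^ (n+1)) := by
  show 1 / ∏ i, A i = n.factorial * ∫ x in solidSimplex n, 1 / barycentricComb A x ^ (n + 1)
  induction n with
  | zero => simp [solidSimplex, barycentricComb, Measure.real, volume_pi]
  | succ n ih =>
    have htail : 1 / ∏ i : Fin (n + 1), A i.succ =
        n.factorial * ∫ y in solidSimplex n, 1 / barycentricComb (Fin.tail A) y ^ (n + 1) :=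
      ih (Fin.tail A) fun i => hA i.succ
    rw [integral_one_div_barycentricComb_pow_succ hA, Fin.prod_univ_succ, ← one_div_mul_one_div,
      htail, Nat.factorial_succ]
    have hA0 := Complex.ne_zero_of_re_pos (hA 0)
    push_cast
    field_simp
end

section
/- For a complex number u with |Arg(u)| < π (i.e., u not a nonpositive real) and a real number α > 1/2, ∫_0^∞ dx/(1 + u x^2)^α = (1/(2√u)) · B(1/2, α - 1/2), where √u denotes the principal square root and B is the Beta function. -/
/-!
For `u = t > 0`, scaling `x ↦ √t x` reduces the integral to `t = 1`, and the substitution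
`v = x² / (1 + x²)`, for which `1 - v = 1 / (1 + x²)`, turns it into Euler's integral
`B(1/2, α - 1/2) / 2`. Both sides are holomorphic in `u` on the slit plane: for the integral,
`‖1 + u x²‖ ≥ c (1 + x²)` locally uniformly in `u`, so the `u`-derivative of the integrand is
dominated by a multiple of the integrable function `(1 + x²)^(-α)`. The identity theorem then
extends the equality from the positive reals to the whole slit plane.
-/

open MeasureTheory Set Complex Metric Filter Topology

lemma integral_Ioi_comp_mul_sq {E : Type*} [NormedAddCommGroup E] [NormedSpace ℝ E]
    (h : ℝ → E) {t : ℝ} (ht : 0 < t) :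
    ∫ x in Ioi (0:ℝ), h (t * x ^ 2) = (√t)⁻¹ • ∫ x in Ioi (0:ℝ), h (x ^ 2) := by
  have := integral_comp_mul_left_Ioi (fun x => h (x ^ 2)) 0 (Real.sqrt_pos.mpr ht)
  simp only [mul_zero, mul_pow, Real.sq_sqrt ht.le] at this
  exact this

lemma hasDerivAt_sq_div_one_add_sq (x : ℝ) :
    HasDerivAt (fun x : ℝ => x ^ 2 / (1 + x ^ 2)) (2 * x / (1 + x ^ 2) ^ 2) x := by
  have hx : (1 + x ^ 2) ≠ 0 := by positivity
  refine ((hasDerivAt_pow 2 x).div ((hasDerivAt_pow 2 x).const_add 1) hx).congr_deriv ?_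
  push_cast
  ring

lemma injOn_sq_div_one_add_sq : InjOn (fun x : ℝ => x ^ 2 / (1 + x ^ 2)) (Ioi 0) := by
  intro a ha b hb hab
  have : a ^ 2 = b ^ 2 := by
    simp only at hab
    rw [div_eq_div_iff (by positivity) (by positivity)] at hab
    linarith
  exact (pow_left_inj₀ ha.le hb.le two_ne_zero).mp this

lemma image_sq_div_one_add_sq : (fun x : ℝ => x ^ 2 / (1 + x ^ 2)) '' Ioi 0 = Ioo 0 1 := by
  refine Subset.antisymm ?_ fun v ⟨hv0, hv1⟩ => ?_
  · rintro _ ⟨x, hx, rfl⟩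
    have : (0:ℝ) < x ^ 2 := pow_pos hx 2
    exact ⟨by positivity, (div_lt_one (by positivity)).mpr (by linarith)⟩
  · have h1v : 0 < 1 - v := by linarith
    refine ⟨√(v / (1 - v)), Real.sqrt_pos.mpr (by positivity), ?_⟩
    simp only [Real.sq_sqrt (div_pos hv0 h1v).le]
    field_simp
    ring

lemma beta_integrand_comp_sq_div_one_add_sq {x : ℝ} (hx : 0 < x) (s : ℂ) :
    |2 * x / (1 + x ^ 2) ^ 2| • (((x ^ 2 / (1 + x ^ 2) : ℝ) : ℂ) ^ ((1:ℂ) / 2 - 1) *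
      (1 - ((x ^ 2 / (1 + x ^ 2) : ℝ) : ℂ)) ^ (s - 1 / 2 - 1)) =
    2 * (1 + (x : ℂ) ^ 2) ^ (-s) := by
  set a : ℝ := 1 + x ^ 2 with ha
  have ha0 : 0 < a := by positivity
  have hA0 : (a : ℂ) ≠ 0 := ofReal_ne_zero.mpr ha0.ne'
  have hsa : √a ^ 2 = a := Real.sq_sqrt ha0.le
  have hsqrt : ((√a : ℝ) : ℂ) = (a : ℂ) ^ ((1:ℂ) / 2) := by
    rw [Real.sqrt_eq_rpow, ofReal_cpow ha0.le]; push_cast; rfl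
  have hv : ((x ^ 2 / a : ℝ) : ℂ) ^ ((1:ℂ) / 2 - 1) = ((√a / x : ℝ) : ℂ) := by
    rw [show (1:ℂ) / 2 - 1 = ((-(1 / 2) : ℝ) : ℂ) by push_cast; ring,
      ← ofReal_cpow (by positivity), Real.rpow_neg (by positivity), ← Real.sqrt_eq_rpow,
      Real.sqrt_div' _ ha0.le, Real.sqrt_sq hx.le, inv_div]
  have h1v : 1 - ((x ^ 2 / a : ℝ) : ℂ) = ((a : ℂ))⁻¹ := by
    have : 1 - x ^ 2 / a = a⁻¹ := by field_simp; rw [ha]; ring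
    exact_mod_cast this
  have hA : ((a : ℂ)).arg ≠ Real.pi := by
    rw [arg_ofReal_of_nonneg ha0.le]; exact Real.pi_ne_zero.symm
  have hs : (a : ℂ) ^ s = (a : ℂ) ^ (s - 1 / 2 - 1) * (a * ((√a : ℝ) : ℂ)) := by
    conv_lhs => rw [show s = (s - 1 / 2 - 1) + (1 + 1 / 2) by ring]
    rw [hsqrt, cpow_add _ _ hA0, cpow_add _ _ hA0, cpow_one]
  have hP : (a : ℂ) ^ (s - 1 / 2 - 1) ≠ 0 := cpow_ne_zero_iff.mpr (Or.inl hA0)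
  rw [hv, h1v, inv_cpow _ _ hA, show (1 : ℂ) + (x : ℂ) ^ 2 = (a : ℂ) by rw [ha]; push_cast; rfl,
    cpow_neg, hs, abs_of_pos (by positivity), real_smul]
  generalize (a : ℂ) ^ (s - 1 / 2 - 1) = P at hP ⊢
  have hx0 : (x : ℂ) ≠ 0 := ofReal_ne_zero.mpr hx.ne'
  have hsa0 : ((√a : ℝ) : ℂ) ≠ 0 := ofReal_ne_zero.mpr (Real.sqrt_pos.mpr ha0).ne'
  have hsa' : ((√a : ℝ) : ℂ) ^ 2 = a := by exact_mod_cast hsa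
  push_cast
  field_simp
  exact hsa'

-- No convergence hypothesis is needed: the change of variables formula also holds when the
-- integrands are not integrable, both integrals then being `0`.
lemma integral_Ioi_one_add_sq_cpow_neg (s : ℂ) :
    ∫ x in Ioi (0:ℝ), (1 + (x : ℂ) ^ 2) ^ (-s) = betaIntegral (1 / 2) (s - 1 / 2) / 2 := by
  rw [betaIntegral, intervalIntegral.integral_of_le zero_le_one, integral_Ioc_eq_integral_Ioo,
    ← image_sq_div_one_add_sq, integral_image_eq_integral_abs_deriv_smul measurableSet_Ioi
      (fun x _ => (hasDerivAt_sq_div_one_add_sq x).hasDerivWithinAt) injOn_sq_div_one_add_sq,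
    setIntegral_congr_fun measurableSet_Ioi fun x hx => beta_integrand_comp_sq_div_one_add_sq hx s,
    integral_const_mul]
  ring

lemma integral_Ioi_one_add_ofReal_mul_sq_cpow_neg {t : ℝ} (ht : 0 < t) (s : ℂ) :
    ∫ x in Ioi (0:ℝ), (1 + (t : ℂ) * (x : ℂ) ^ 2) ^ (-s) =
      1 / (2 * (t : ℂ) ^ ((1:ℂ) / 2)) * betaIntegral (1 / 2) (s - 1 / 2) := by
  have hsqrt : (t : ℂ) ^ ((1:ℂ) / 2) = ((√t : ℝ) : ℂ) := by
    rw [Real.sqrt_eq_rpow, ofReal_cpow ht.le]; push_cast; rfl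
  have := integral_Ioi_comp_mul_sq (fun y : ℝ => (1 + (y : ℂ)) ^ (-s)) ht
  push_cast at this
  rw [this, integral_Ioi_one_add_sq_cpow_neg, hsqrt, real_smul]
  push_cast
  ring

lemma one_add_mul_sq_mem_slitPlane {u : ℂ} (hu : u ∈ slitPlane) (x : ℝ) :
    1 + u * (x : ℂ) ^ 2 ∈ slitPlane := by
  rcases eq_or_ne x 0 with rfl | hx
  · simp
  have hx2 : (0 : ℝ) < x ^ 2 := by positivity
  have hcast : (x : ℂ) ^ 2 = ((x ^ 2 : ℝ) : ℂ) := by push_cast; rfl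
  rw [mem_slitPlane_iff, hcast] at *
  simp only [add_re, one_re, re_mul_ofReal, add_im, one_im, im_mul_ofReal, zero_add]
  rcases hu with hre | him
  · exact Or.inl (by positivity)
  · exact Or.inr (mul_ne_zero him hx2.ne')

lemma exists_pos_mul_le_norm_one_add_mul_sq {K : Set ℂ} (hK : IsCompact K)
    (hKs : K ⊆ slitPlane) :
    ∃ c > 0, ∀ u ∈ K, ∀ x : ℝ, c * (1 + x ^ 2) ≤ ‖1 + u * (x : ℂ) ^ 2‖ := by
  -- `1 + y • (u - 1)` runs over the segment from `1` to `u`, which stays in the slit plane.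
  obtain ⟨c, hc, hle⟩ := (hK.prod isCompact_Icc).exists_forall_le' (a := 0)
    (f := fun p : ℂ × ℝ => ‖1 + p.2 • (p.1 - 1)‖) (by fun_prop) fun p hp =>
      norm_pos_iff.mpr <| slitPlane_ne_zero <| starConvex_one_slitPlane.add_smul_mem
        (by simpa using hKs hp.1) hp.2.1 hp.2.2
  refine ⟨c, hc, fun u hu x => ?_⟩
  have hx : (0 : ℝ) < 1 + x ^ 2 := by positivity
  have hy : x ^ 2 / (1 + x ^ 2) ∈ Icc (0 : ℝ) 1 :=
    ⟨by positivity, (div_le_one hx).mpr (by linarith)⟩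
  have hscale : 1 + (x ^ 2 / (1 + x ^ 2)) • (u - 1) = (1 + x ^ 2)⁻¹ • (1 + u * (x : ℂ) ^ 2) := by
    have : (1 + (x : ℂ) ^ 2) ≠ 0 := by exact_mod_cast hx.ne'
    simp only [real_smul]
    push_cast
    field_simp
    ring
  have := hle (u, x ^ 2 / (1 + x ^ 2)) ⟨hu, hy⟩
  rw [hscale, norm_smul, Real.norm_of_nonneg (by positivity), inv_mul_eq_div,
    le_div_iff₀ hx] at this
  linarith

lemma norm_cpow_neg_le_of_le {z : ℂ} {b r : ℝ} (hb : 0 < b) (hr : 0 ≤ r) (h : b ≤ ‖z‖) :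
    ‖z ^ (-(r : ℂ))‖ ≤ b ^ (-r) := by
  rw [← ofReal_neg, norm_cpow_real]
  exact Real.rpow_le_rpow_of_nonpos hb h (by linarith)

lemma norm_deriv_one_add_mul_sq_cpow_neg_le {α c x : ℝ} {u : ℂ} (hα : 0 ≤ α) (hc : 0 < c)
    (h : c * (1 + x ^ 2) ≤ ‖1 + u * (x : ℂ) ^ 2‖) :
    ‖-(α : ℂ) * (1 + u * (x : ℂ) ^ 2) ^ (-(α : ℂ) - 1) * (x : ℂ) ^ 2‖ ≤
      α * c ^ (-(α + 1)) * (1 + x ^ 2) ^ (-α) := by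
  have hx : 0 < 1 + x ^ 2 := by positivity
  rw [show -(α : ℂ) - 1 = -((α + 1 : ℝ) : ℂ) by push_cast; ring, norm_mul, norm_mul, norm_neg,
    norm_real, Real.norm_of_nonneg hα, norm_pow, norm_real, Real.norm_eq_abs, sq_abs]
  calc α * ‖(1 + u * (x : ℂ) ^ 2) ^ (-((α + 1 : ℝ) : ℂ))‖ * x ^ 2
      ≤ α * (c * (1 + x ^ 2)) ^ (-(α + 1)) * (1 + x ^ 2) := by
        gcongr
        · exact norm_cpow_neg_le_of_le (by positivity) (by linarith) h
        · linarith
    _ = α * c ^ (-(α + 1)) * (1 + x ^ 2) ^ (-α) := by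
        rw [Real.mul_rpow hc.le hx.le, mul_assoc, mul_assoc (c ^ _), ← Real.rpow_add_one hx.ne',
          mul_assoc]
        ring_nf

lemma integrableOn_one_add_sq_rpow_neg {α : ℝ} (hα : 1 / 2 < α) :
    IntegrableOn (fun x : ℝ => (1 + x ^ 2) ^ (-α)) (Ioi 0) := by
  have := integrable_rpow_neg_one_add_norm_sq (E := ℝ) (μ := volume) (r := 2 * α)
    (by rw [Module.finrank_self]; push_cast; linarith)
  simp only [Real.norm_eq_abs, sq_abs, show -(2 * α) / 2 = -α by ring] at this
  exact this.integrableOn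

lemma continuous_one_add_mul_sq_cpow {u : ℂ} (hu : u ∈ slitPlane) (w : ℂ) :
    Continuous fun x : ℝ => (1 + u * (x : ℂ) ^ 2) ^ w :=
  (by fun_prop : Continuous fun x : ℝ => 1 + u * (x : ℂ) ^ 2).cpow continuous_const
    (one_add_mul_sq_mem_slitPlane hu)

lemma differentiableOn_integral_one_add_mul_sq_cpow {α : ℝ} (hα : 1 / 2 < α) :
    DifferentiableOn ℂ (fun u : ℂ => ∫ x in Ioi (0:ℝ), (1 + u * (x : ℂ) ^ 2) ^ (-(α : ℂ)))
      slitPlane := by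
  intro u₀ hu₀
  obtain ⟨ε, hε, hball⟩ := nhds_basis_closedBall.mem_iff.mp (isOpen_slitPlane.mem_nhds hu₀)
  obtain ⟨c, hc, hbd⟩ := exists_pos_mul_le_norm_one_add_mul_sq (isCompact_closedBall u₀ ε) hball
  have hα0 : 0 ≤ α := by linarith
  have hint := integrableOn_one_add_sq_rpow_neg hα
  refine (hasDerivAt_integral_of_dominated_loc_of_deriv_le (ball_mem_nhds u₀ hε)
    (F' := fun u x => -(α : ℂ) * (1 + u * (x : ℂ) ^ 2) ^ (-(α : ℂ) - 1) * (x : ℂ) ^ 2)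
    (bound := fun x => α * c ^ (-(α + 1)) * (1 + x ^ 2) ^ (-α)) ?_ ?_ ?_ ?_
    (hint.const_mul _) ?_).2.differentiableAt.differentiableWithinAt
  · filter_upwards [isOpen_slitPlane.mem_nhds hu₀] with u hu
    exact (continuous_one_add_mul_sq_cpow hu _).aestronglyMeasurable
  · refine (hint.const_mul (c ^ (-α))).mono'
      (continuous_one_add_mul_sq_cpow hu₀ _).aestronglyMeasurable (ae_of_all _ fun x => ?_)
    rw [← Real.mul_rpow hc.le (by positivity)]
    exact norm_cpow_neg_le_of_le (by positivity) hα0 (hbd u₀ (mem_closedBall_self hε.le) x)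
  · exact ((continuous_const.mul (continuous_one_add_mul_sq_cpow hu₀ _)).mul
      (by fun_prop)).aestronglyMeasurable
  · exact ae_of_all _ fun x u hu =>
      norm_deriv_one_add_mul_sq_cpow_neg_le hα0 hc (hbd u (ball_subset_closedBall hu) x)
  · refine ae_of_all _ fun x u hu => ?_
    have hd : HasDerivAt (fun u : ℂ => 1 + u * (x : ℂ) ^ 2) ((x : ℂ) ^ 2) u := by
      simpa using ((hasDerivAt_id u).mul_const ((x : ℂ) ^ 2)).const_add 1
    exact (hd.cpow_const (c := -(α : ℂ)) (one_add_mul_sq_mem_slitPlane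
      (hball (ball_subset_closedBall hu)) x)).congr_deriv (by ring)

lemma eqOn_slitPlane_of_eq_of_pos {E : Type*} [NormedAddCommGroup E] [NormedSpace ℂ E]
    [CompleteSpace E] {f g : ℂ → E} (hf : DifferentiableOn ℂ f slitPlane)
    (hg : DifferentiableOn ℂ g slitPlane) (hfg : ∀ t : ℝ, 0 < t → f t = g t) :
    EqOn f g slitPlane := by
  have hreal : Tendsto (fun t : ℝ => (t : ℂ)) (𝓝[>] 1) (𝓝[≠] 1) :=
    tendsto_nhdsWithin_of_tendsto_nhds_of_eventually_within _
      ((continuous_ofReal.tendsto' 1 1 ofReal_one).mono_left nhdsWithin_le_nhds)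
      (eventually_nhdsWithin_of_forall fun t ht => by simpa using ht.ne')
  refine (hf.analyticOnNhd isOpen_slitPlane).eqOn_of_preconnected_of_frequently_eq
    (hg.analyticOnNhd isOpen_slitPlane)
    (starConvex_one_slitPlane.isPathConnected one_mem_slitPlane).isConnected.isPreconnected
    one_mem_slitPlane ?_
  have hpos : ∀ᶠ t : ℝ in 𝓝[>] 1, f t = g t :=
    eventually_nhdsWithin_of_forall fun t ht => hfg t (one_pos.trans ht)
  exact hreal.frequently hpos.frequently

theorem gr_3_194_3 (u : ℂ) (hu : ¬(u.im = 0 ∧ u.re ≤ 0)) (α : ℝ) (hα : 1/2 < α) :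
    ∫ x in Set.Ioi (0:ℝ), ((1 + u * (x:ℂ)^2) ^ (-(α:ℂ))) =
      1 / (2 * u ^ ((1:ℂ)/2)) *
        (Complex.Gamma (1/2) * Complex.Gamma ((α:ℂ) - 1/2) / Complex.Gamma (α:ℂ)) := by
  have hslit : u ∈ slitPlane := by
    rw [mem_slitPlane_iff]
    by_contra! h
    exact hu ⟨h.2, h.1⟩
  have hbeta : betaIntegral (1 / 2) ((α : ℂ) - 1 / 2) =
      Gamma (1 / 2) * Gamma ((α : ℂ) - 1 / 2) / Gamma (α : ℂ) := by
    rw [betaIntegral_eq_Gamma_mul_div _ _ (by norm_num) (by simpa using hα), add_sub_cancel]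
  rw [← hbeta]
  refine eqOn_slitPlane_of_eq_of_pos (differentiableOn_integral_one_add_mul_sq_cpow hα)
    (g := fun z => 1 / (2 * z ^ ((1:ℂ) / 2)) * betaIntegral (1 / 2) ((α : ℂ) - 1 / 2)) ?_
    (fun t ht => integral_Ioi_one_add_ofReal_mul_sq_cpow_neg ht _) hslit
  intro z hz
  have hne : 2 * z ^ ((1:ℂ) / 2) ≠ 0 :=
    mul_ne_zero two_ne_zero (cpow_ne_zero_iff.mpr (Or.inl (slitPlane_ne_zero hz)))
  exact (((differentiableAt_const _).div ((differentiableAt_id.cpow_const hz).const_mul 2)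
    hne).mul_const _).differentiableWithinAt
end

section
/- For real t with 0 ≤ t < 1, ₂F₁(9/4, 3/4; 5/2; t) = 2√2 (3 + 2√(1-t)) / (5 (1 + √(1-t))^(3/2) · √(1-t)). -/
/-- The Gauss hypergeometric series ₂F₁(a,b;c;x). -/
noncomputable def hyp2F1 (a b c x : ℝ) : ℝ :=
  ∑' k : ℕ, (ascPochhammer ℝ k).eval a * (ascPochhammer ℝ k).eval b /
      ((ascPochhammer ℝ k).eval c * (Nat.factorial k)) * x^k

/-!
With `t = u²`, the coefficient `(9/4)ₖ (3/4)ₖ / ((5/2)ₖ k!)` equals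
`6/5 · (4k+5)/(2k+3) · p (2k+1)`, where `p n = (1/2)ₙ / n!` is the `n`-th coefficient of
`(1 - x)^(-1/2)`, and hence `8/5 p(2k+1) - 4/5 p(2k+2) + 8/5 p(2k+3)`. So `u³ · ₂F₁(u²)` is a
combination of the even and odd parts of `(1 - u)^(-1/2)`, i.e. of `1/√(1-u) ± 1/√(1+u)`.
Writing `A = √(1-u)`, `B = √(1+u)`, one has `√(1-t) = AB` and `1 + √(1-t) = (A+B)²/2`,
and the closed form reduces to a polynomial identity in `u, A, B`.
-/

open Real

noncomputable def pochhammerCoeff (a : ℝ) (n : ℕ) : ℝ :=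
  (ascPochhammer ℝ n).eval a / n.factorial

noncomputable def hyp2F1Coeff (a b c : ℝ) (k : ℕ) : ℝ :=
  (ascPochhammer ℝ k).eval a * (ascPochhammer ℝ k).eval b /
    ((ascPochhammer ℝ k).eval c * k.factorial)

theorem hyp2F1_eq_tsum (a b c x : ℝ) :
    hyp2F1 a b c x = ∑' k, hyp2F1Coeff a b c k * x ^ k := rfl

theorem hyp2F1_zero (a b c : ℝ) : hyp2F1 a b c 0 = 1 := by
  rw [hyp2F1_eq_tsum, tsum_eq_single 0 fun k hk => by simp [hk]]
  simp [hyp2F1Coeff]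

theorem pochhammerCoeff_succ (a : ℝ) (n : ℕ) :
    pochhammerCoeff a (n + 1) = pochhammerCoeff a n * ((a + n) / (n + 1)) := by
  rw [pochhammerCoeff, pochhammerCoeff, ascPochhammer_succ_eval, Nat.factorial_succ,
    Nat.cast_mul, mul_comm ((n + 1 : ℕ) : ℝ), div_mul_div_comm]
  push_cast
  ring

theorem hyp2F1Coeff_succ (a b c : ℝ) (k : ℕ) :
    hyp2F1Coeff a b c (k + 1) =
      hyp2F1Coeff a b c k * ((a + k) * (b + k) / ((c + k) * (k + 1))) := by
  simp only [hyp2F1Coeff, ascPochhammer_succ_eval, Nat.factorial_succ, Nat.cast_mul,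
    Nat.cast_succ]
  rw [div_mul_div_comm]
  ring

theorem pochhammerCoeff_eq_choose (a : ℝ) (n : ℕ) :
    pochhammerCoeff a n = Ring.choose (a + n - 1) n := by
  have h := Ring.factorial_nsmul_multichoose_eq_ascPochhammer a n
  rw [Polynomial.ascPochhammer_smeval_eq_eval, nsmul_eq_mul] at h
  rw [pochhammerCoeff, ← Ring.multichoose_eq, ← h, mul_div_cancel_left₀ _ (by positivity)]

theorem hasSum_pochhammerCoeff_mul_pow (a : ℝ) {x : ℝ} (hx : |x| < 1) :
    HasSum (fun n => pochhammerCoeff a n * x ^ n) (1 / (1 - x) ^ a) := by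
  have h := (one_div_one_sub_rpow_hasFPowerSeriesOnBall_zero a).hasSum (y := x)
    (by simpa [edist_dist] using hx)
  simpa [FormalMultilinearSeries.ofScalars_apply_eq, pochhammerCoeff_eq_choose, mul_comm] using h

section EvenOdd

variable {K : Type*} [Field K] [NeZero (2 : K)] [TopologicalSpace K] [IsTopologicalRing K]
  {f : ℕ → K} {a b : K}

theorem HasSum.hasSum_comp_two_mul (ha : HasSum f a) (hb : HasSum (fun n => (-1) ^ n * f n) b) :
    HasSum (fun k => f (2 * k)) ((a + b) / 2) := by
  have h := (ha.add hb).div_const 2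
  rw [← (mul_right_injective₀ two_ne_zero).hasSum_iff] at h
  · convert h using 2 with k
    simp [pow_mul]
  · rintro n hn
    have : Odd n := by
      rw [← Nat.not_even_iff_odd]
      rintro ⟨k, rfl⟩
      exact hn ⟨k, by simp [two_mul]⟩
    simp [this.neg_one_pow]

theorem HasSum.hasSum_comp_two_mul_add_one (ha : HasSum f a)
    (hb : HasSum (fun n => (-1) ^ n * f n) b) :
    HasSum (fun k => f (2 * k + 1)) ((a - b) / 2) := by
  have h := (ha.sub hb).div_const 2
  rw [← ((add_left_injective 1).comp (mul_right_injective₀ two_ne_zero)).hasSum_iff] at h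
  · convert h using 2 with k
    simp [pow_succ, pow_mul]
  · rintro n hn
    have : Even n := by
      rw [← Nat.not_odd_iff_even]
      rintro ⟨k, rfl⟩
      exact hn ⟨k, rfl⟩
    simp [this.neg_one_pow]

end EvenOdd

theorem pochhammerCoeff_half_two_mul_add_two (k : ℕ) :
    pochhammerCoeff (1/2) (2 * k + 2) =
      pochhammerCoeff (1/2) (2 * k + 1) * ((4 * k + 3) / (4 * k + 4)) := by
  rw [pochhammerCoeff_succ]
  push_cast
  field_simp
  ring

theorem pochhammerCoeff_half_two_mul_add_three (k : ℕ) :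
    pochhammerCoeff (1/2) (2 * k + 3) = pochhammerCoeff (1/2) (2 * k + 1) *
      ((4 * k + 3) / (4 * k + 4)) * ((4 * k + 5) / (4 * k + 6)) := by
  rw [pochhammerCoeff_succ, pochhammerCoeff_half_two_mul_add_two]
  push_cast
  field_simp
  ring

theorem hyp2F1Coeff_eq_pochhammerCoeff_half (k : ℕ) :
    hyp2F1Coeff (9/4) (3/4) (5/2) k =
      6/5 * (4 * k + 5) / (2 * k + 3) * pochhammerCoeff (1/2) (2 * k + 1) := by
  induction k with
  | zero => norm_num [hyp2F1Coeff, pochhammerCoeff]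
  | succ k ih =>
    rw [hyp2F1Coeff_succ, ih, show 2 * (k + 1) + 1 = 2 * k + 3 by ring,
      pochhammerCoeff_half_two_mul_add_three]
    push_cast
    field_simp
    ring

theorem hyp2F1Coeff_eq_pochhammerCoeff_half_add (k : ℕ) :
    hyp2F1Coeff (9/4) (3/4) (5/2) k =
      8/5 * pochhammerCoeff (1/2) (2 * k + 1) - 4/5 * pochhammerCoeff (1/2) (2 * k + 2)
        + 8/5 * pochhammerCoeff (1/2) (2 * k + 3) := by
  rw [hyp2F1Coeff_eq_pochhammerCoeff_half, pochhammerCoeff_half_two_mul_add_three,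
    pochhammerCoeff_half_two_mul_add_two]
  field_simp
  ring

theorem hasSum_pochhammerCoeff_half_mul_pow {x : ℝ} (hx : |x| < 1) :
    HasSum (fun n => pochhammerCoeff (1/2) n * x ^ n) (√(1 - x))⁻¹ := by
  simpa [sqrt_eq_rpow] using hasSum_pochhammerCoeff_mul_pow (1/2) hx

theorem hasSum_hyp2F1Coeff_mul_sq_pow_of_hasSum {u E O : ℝ} (hu : u ≠ 0)
    (hE : HasSum (fun k => pochhammerCoeff (1/2) (2 * k) * u ^ (2 * k)) E)
    (hO : HasSum (fun k => pochhammerCoeff (1/2) (2 * k + 1) * u ^ (2 * k + 1)) O) :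
    HasSum (fun k => hyp2F1Coeff (9/4) (3/4) (5/2) k * (u ^ 2) ^ k)
      ((8/5 * u ^ 2 * O - 4/5 * u * (E - 1) + 8/5 * (O - 1/2 * u)) / u ^ 3) := by
  have hp0 : pochhammerCoeff (1/2) 0 = 1 := by simp [pochhammerCoeff]
  have hp1 : pochhammerCoeff (1/2) 1 = 1/2 := by norm_num [pochhammerCoeff]
  have hE' := (hasSum_nat_add_iff' 1).mpr hE
  have hO' := (hasSum_nat_add_iff' 1).mpr hO
  simp only [Finset.range_one, Finset.sum_singleton, mul_zero, zero_add, pow_zero, pow_one,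
    hp0, hp1, one_mul, mul_add, add_assoc] at hE' hO'
  refine ((((hO.mul_left (8/5 * u ^ 2)).sub (hE'.mul_left (4/5 * u))).add
    (hO'.mul_left (8/5))).div_const (u ^ 3)).congr_fun fun k => ?_
  rw [hyp2F1Coeff_eq_pochhammerCoeff_half_add, eq_div_iff (pow_ne_zero 3 hu)]
  ring

theorem closedForm_identity {u A B : ℝ} (hA : A ^ 2 = 1 - u) (hB : B ^ 2 = 1 + u) :
    (2 * (1 + u ^ 2) * (B - A) - u * (A + B)) * (A + B) ^ 3 = 4 * u ^ 3 * (3 + 2 * A * B) := by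
  have hsum : (A + B) ^ 2 = 2 * (1 + A * B) := by linear_combination hA + hB
  have hdiff : (B - A) * (A + B) = 2 * u := by linear_combination hB - hA
  have hprod : (A * B) ^ 2 = 1 - u ^ 2 := by linear_combination B ^ 2 * hA + (1 - u) * hB
  calc (2 * (1 + u ^ 2) * (B - A) - u * (A + B)) * (A + B) ^ 3
      = (2 * (1 + u ^ 2) * ((B - A) * (A + B)) - u * (A + B) ^ 2) * (A + B) ^ 2 := by ring
    _ = (2 * (1 + u ^ 2) * (2 * u) - u * (2 * (1 + A * B))) * (2 * (1 + A * B)) := by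
      rw [hdiff, hsum]
    _ = 4 * u ^ 3 * (3 + 2 * A * B) := by linear_combination (-4 * u) * hprod

theorem hasSum_hyp2F1Coeff_mul_sq_pow_closedForm {u : ℝ} (hu0 : u ≠ 0) (hu : |u| < 1) :
    HasSum (fun k => hyp2F1Coeff (9/4) (3/4) (5/2) k * (u ^ 2) ^ k)
      (8 * (3 + 2 * √(1 - u) * √(1 + u)) /
        (5 * (√(1 - u) + √(1 + u)) ^ 3 * (√(1 - u) * √(1 + u)))) := by
  have hpos := hasSum_pochhammerCoeff_half_mul_pow hu
  have hneg : HasSum (fun n => (-1) ^ n * (pochhammerCoeff (1/2) n * u ^ n)) (√(1 + u))⁻¹ := by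
    convert hasSum_pochhammerCoeff_half_mul_pow (x := -u) (by rwa [abs_neg]) using 1
    · funext n
      rw [neg_pow]
      ring
    · rw [sub_neg_eq_add]
  convert hasSum_hyp2F1Coeff_mul_sq_pow_of_hasSum hu0 (hpos.hasSum_comp_two_mul hneg)
    (hpos.hasSum_comp_two_mul_add_one hneg) using 1
  obtain ⟨hu1, hu2⟩ := abs_lt.mp hu
  set A := √(1 - u)
  set B := √(1 + u)
  have hA : 0 < A := sqrt_pos.mpr (by linarith)
  have hB : 0 < B := sqrt_pos.mpr (by linarith)
  have key := closedForm_identity (sq_sqrt (by linarith : 0 ≤ 1 - u))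
    (sq_sqrt (by linarith : 0 ≤ 1 + u))
  calc 8 * (3 + 2 * A * B) / (5 * (A + B) ^ 3 * (A * B))
      = 2 * (2 * (1 + u ^ 2) * (B - A) - u * (A + B)) / (5 * u ^ 3 * (A * B)) := by
        rw [div_eq_div_iff (by positivity) (by positivity)]
        linear_combination (-10 * A * B) * key
    _ = _ := by
        field_simp
        ring

theorem hyp2F1_sq_eq {u : ℝ} (hu : |u| < 1) :
    hyp2F1 (9/4) (3/4) (5/2) (u ^ 2) =
      8 * (3 + 2 * √(1 - u) * √(1 + u)) /
        (5 * (√(1 - u) + √(1 + u)) ^ 3 * (√(1 - u) * √(1 + u))) := by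
  rcases eq_or_ne u 0 with rfl | hu0
  · norm_num [hyp2F1_zero]
  · exact (hasSum_hyp2F1Coeff_mul_sq_pow_closedForm hu0 hu).tsum_eq

theorem sqrt_one_sub_sq {u : ℝ} (hu : u ≤ 1) : √(1 - u ^ 2) = √(1 - u) * √(1 + u) := by
  rw [← sqrt_mul (sub_nonneg.mpr hu)]
  ring_nf

theorem sq_rpow_three_halves {y : ℝ} (hy : 0 ≤ y) : (y ^ 2) ^ (3/2 : ℝ) = y ^ 3 := by
  rw [← rpow_natCast, ← rpow_mul hy]
  norm_num

theorem one_add_sqrt_one_sub_sq_rpow {u : ℝ} (hu : |u| ≤ 1) :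
    (1 + √(1 - u ^ 2)) ^ (3/2 : ℝ) = (√(1 - u) + √(1 + u)) ^ 3 / (2 * √2) := by
  obtain ⟨hu1, hu2⟩ := abs_le.mp hu
  have hsq : 1 + √(1 - u ^ 2) = ((√(1 - u) + √(1 + u)) / √2) ^ 2 := by
    rw [sqrt_one_sub_sq hu2, div_pow, sq_sqrt zero_le_two, add_sq, sq_sqrt (by linarith),
      sq_sqrt (by linarith)]
    ring
  rw [hsq, sq_rpow_three_halves (by positivity), div_pow]
  congr 1
  rw [pow_succ, sq_sqrt zero_le_two, mul_comm]

theorem hyper_init_2 (t : ℝ) (ht0 : 0 ≤ t) (ht1 : t < 1) :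
    hyp2F1 (9/4) (3/4) (5/2) t =
      2 * Real.sqrt 2 * (3 + 2 * Real.sqrt (1 - t)) /
        (5 * (1 + Real.sqrt (1 - t)) ^ ((3:ℝ)/2) * Real.sqrt (1 - t)) := by
  obtain ⟨u, hu, rfl⟩ : ∃ u : ℝ, |u| < 1 ∧ t = u ^ 2 :=
    ⟨√t, by rwa [abs_of_nonneg (sqrt_nonneg t), sqrt_lt' one_pos, one_pow],
      (sq_sqrt ht0).symm⟩
  obtain ⟨hu1, hu2⟩ := abs_lt.mp hu
  rw [hyp2F1_sq_eq hu, one_add_sqrt_one_sub_sq_rpow hu.le, sqrt_one_sub_sq hu2.le]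
  have hA : 0 < √(1 - u) := sqrt_pos.mpr (by linarith)
  have hB : 0 < √(1 + u) := sqrt_pos.mpr (by linarith)
  field_simp
  rw [sq_sqrt zero_le_two]
  ring
end

section
/- Define the sequence of rational functions Q_m by Q_0(a) = 1 and the recurrence 2(m+1) Q_{m+1}(a) = [2(m+1)(a+1) + (2m+1)] Q_m(a) + [2(a+1)^2 - 2(a+1)] Q_m'(a). Then each Q_m is a polynomial in a, and Q_m(a) = P_m(a) := 2^(-2m) Σ_{k=0}^m 2^k · C(2m-2k, m-k) · C(m+k, k) · (a+1)^k for all m. -/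
/-!
Both sides satisfy the same recurrence and agree at `m = 0`, so they agree for all `m` because
`2(m+1) ≠ 0`. To see that `P_m` satisfies the recurrence, put `y = a + 1` and `p_m(y) = 4^m P_m(a)`.
The recurrence becomes
`(m+1) p_{m+1} = (4(m+1) y + 4m+2) p_m + 4(y² - y) p_m'`,
that is, on the coefficients `c_{m,k}` of `p_m`,
`(m+1) c_{m+1,k} = 4(m+k) c_{m,k-1} + (4m+2-4k) c_{m,k}`.
Writing `c_{m,k} = 2^k C(2j, j) C(j+2k, k)` with `j = m - k`, this follows from
`(n+1) C(2n+2, n+1) = 2(2n+1) C(2n, n)` and Pascal's rule.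
-/

open Polynomial Finset

theorem Nat.add_two_mul_choose_succ (j i : ℕ) :
    (j + i + 2) * (j + 2 * i + 3).choose (i + 1) =
      2 * (j + 2 * i + 2) * (j + 2 * i + 1).choose i + (j + 1) * (j + 2 * i + 2).choose (i + 1) := by
  have pascal := Nat.choose_succ_succ' (j + 2 * i + 2) i
  have h₁ := Nat.add_one_mul_choose_eq (j + 2 * i + 1) i
  have h₂ := Nat.choose_mul_succ_eq (j + 2 * i + 1) i
  rw [show j + 2 * i + 1 + 1 - i = j + i + 2 by omega] at h₂
  rw [pascal]
  linear_combination h₁.symm + h₂.symm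

theorem Polynomial.coeff_X_mul_derivative {R : Type*} [Semiring R] (p : R[X]) (n : ℕ) :
    (X * derivative p).coeff n = n * p.coeff n := by
  rcases n with _ | n
  · simp
  · rw [coeff_X_mul, coeff_derivative, ← Nat.cast_succ]
    exact (Nat.cast_comm _ _).symm

/-- The coefficient `c_{m,k}` of `y^k` in `p_m`, indexed by `j = m - k` and `k`. -/
def coeffP (j k : ℕ) : ℕ := 2 ^ k * j.centralBinom * (j + 2 * k).choose k

theorem coeffP_sub (m k : ℕ) (hk : k ≤ m) :
    coeffP (m - k) k = 2 ^ k * (2 * m - 2 * k).choose (m - k) * (m + k).choose k := by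
  rw [coeffP, Nat.centralBinom_eq_two_mul_choose, show m - k + 2 * k = m + k by omega,
    show 2 * (m - k) = 2 * m - 2 * k by omega]

theorem coeffP_succ_zero (j : ℕ) : (j + 1) * coeffP (j + 1) 0 = (4 * j + 2) * coeffP j 0 := by
  simp only [coeffP, pow_zero, one_mul, Nat.choose_zero_right, mul_one, Nat.succ_mul_centralBinom_succ]
  ring

theorem coeffP_zero_succ (k : ℕ) : (k + 1) * coeffP 0 (k + 1) = 4 * (2 * k + 1) * coeffP 0 k := by
  simp only [coeffP, Nat.centralBinom_zero, mul_one, zero_add, ← Nat.centralBinom_eq_two_mul_choose]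
  linear_combination 2 ^ (k + 1) * Nat.succ_mul_centralBinom_succ k

theorem coeffP_succ_succ (j k : ℕ) :
    (j + k + 2) * coeffP (j + 1) (k + 1) =
      4 * (j + 2 * k + 2) * coeffP (j + 1) k + (4 * j + 2) * coeffP j (k + 1) := by
  simp only [coeffP]
  rw [show j + 1 + 2 * (k + 1) = j + 2 * k + 3 by ring, show j + 1 + 2 * k = j + 2 * k + 1 by ring,
    show j + 2 * (k + 1) = j + 2 * k + 2 by ring]
  linear_combination 2 ^ (k + 1) * (j + 1).centralBinom * Nat.add_two_mul_choose_succ j k +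
    2 ^ (k + 1) * (j + 2 * k + 2).choose (k + 1) * Nat.succ_mul_centralBinom_succ j

/-- `p_m(y) = 4^m P_m(y - 1)`. -/
noncomputable def scaledP (m : ℕ) : ℝ[X] := ∑ k ∈ range (m + 1), C (coeffP (m - k) k : ℝ) * X ^ k

theorem coeff_scaledP (m n : ℕ) :
    (scaledP m).coeff n = if n ≤ m then (coeffP (m - n) n : ℝ) else 0 := by
  simp [scaledP]

theorem scaledP_succ (m : ℕ) :
    C ((m : ℝ) + 1) * scaledP (m + 1) =
      (C (4 * ((m : ℝ) + 1)) * X + C (4 * (m : ℝ) + 2)) * scaledP m +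
        C 4 * (X ^ 2 - X) * derivative (scaledP m) := by
  set p := scaledP m
  rw [show (C (4 * ((m : ℝ) + 1)) * X + C (4 * (m : ℝ) + 2)) * p + C 4 * (X ^ 2 - X) * derivative p =
      C (4 * ((m : ℝ) + 1)) * (X * p) + C (4 * (m : ℝ) + 2) * p + C 4 * (X * (X * derivative p)) -
        C 4 * (X * derivative p) by ring]
  ext n
  rcases n with _ | n
  · have hc : ((m + 1) * coeffP (m + 1) 0 : ℝ) = (4 * m + 2) * coeffP m 0 := by
      exact_mod_cast coeffP_succ_zero m
    simpa [p, coeff_scaledP] using hc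
  · simp only [coeff_add, coeff_sub, coeff_C_mul, coeff_X_mul_derivative]
    simp only [coeff_X_mul, coeff_X_mul_derivative, p, coeff_scaledP]
    rcases lt_trichotomy n m with h | rfl | h
    · obtain ⟨j, rfl⟩ := Nat.exists_eq_add_of_lt h
      have hc : ((j + n + 2) * coeffP (j + 1) (n + 1) : ℝ) =
          4 * (j + 2 * n + 2) * coeffP (j + 1) n + (4 * j + 2) * coeffP j (n + 1) := by
        exact_mod_cast coeffP_succ_succ j n
      simp only [show n ≤ n + j + 1 by omega, show n + 1 ≤ n + j + 1 by omega,
        show n + 1 ≤ n + j + 1 + 1 by omega, if_true, show n + j + 1 - n = j + 1 by omega,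
        show n + j + 1 - (n + 1) = j by omega, show n + j + 1 + 1 - (n + 1) = j + 1 by omega]
      push_cast
      linear_combination hc
    · have hc : ((n + 1) * coeffP 0 (n + 1) : ℝ) = 4 * (2 * n + 1) * coeffP 0 n := by
        exact_mod_cast coeffP_zero_succ n
      simp only [le_refl, show ¬ n + 1 ≤ n by omega, if_true, if_false, Nat.sub_self]
      linear_combination hc
    · simp [show ¬ n ≤ m by omega, show ¬ n + 1 ≤ m by omega, show ¬ n + 1 ≤ m + 1 by omega]

noncomputable def polyP (m : ℕ) : ℝ[X] := C ((4 : ℝ) ^ m)⁻¹ * (scaledP m).comp (X + 1)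

theorem polyP_eq (m : ℕ) :
    polyP m = C ((2 : ℝ) ^ (-(2 * (m : ℤ)))) *
      ∑ k ∈ range (m + 1),
        C ((2 : ℝ) ^ k * (Nat.choose (2 * m - 2 * k) (m - k)) * (Nat.choose (m + k) k)) * (X + 1) ^ k := by
  have h4 : (2 : ℝ) ^ (-(2 * (m : ℤ))) = ((4 : ℝ) ^ m)⁻¹ := by
    rw [zpow_neg, zpow_mul, zpow_natCast]
    norm_num
  rw [polyP, scaledP, h4, Polynomial.sum_comp]
  congr 1
  refine sum_congr rfl fun k hk => ?_
  rw [coeffP_sub m k (by simpa [Nat.lt_succ_iff] using hk)]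
  simp

theorem polyP_succ (m : ℕ) :
    C (2 * ((m : ℝ) + 1)) * polyP (m + 1) =
      (C (2 * ((m : ℝ) + 1)) * (X + 1) + C (2 * (m : ℝ) + 1)) * polyP m +
        (2 * (X + 1) ^ 2 - 2 * (X + 1)) * derivative (polyP m) := by
  refine Polynomial.funext fun x => ?_
  have h := congrArg (eval (x + 1)) (scaledP_succ m)
  simp only [polyP, derivative_mul, derivative_C, derivative_comp, derivative_add, derivative_X,
    derivative_one, eval_mul, eval_add, eval_sub, eval_pow, eval_C, eval_X, eval_one, eval_zero,
    eval_comp, eval_ofNat] at h ⊢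
  rw [pow_succ, mul_inv]
  linear_combination ((4 : ℝ) ^ m)⁻¹ / 2 * h

theorem Q_eq_P (Q : ℕ → Polynomial ℝ) (hQ0 : Q 0 = 1)
    (hrec : ∀ m : ℕ, C (2*((m:ℝ)+1)) * Q (m+1) =
        (C (2*((m:ℝ)+1)) * (X + 1) + C (2*(m:ℝ)+1)) * Q m +
          (2*(X+1)^2 - 2*(X+1)) * derivative (Q m)) :
    ∀ m : ℕ, Q m = C ((2:ℝ) ^ (-(2*(m:ℤ)))) *
      ∑ k ∈ Finset.range (m+1),
        C ((2:ℝ)^k * (Nat.choose (2*m - 2*k) (m - k)) * (Nat.choose (m+k) k)) * (X + 1)^k := by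
  intro m
  rw [← polyP_eq]
  induction m with
  | zero => simp [hQ0, polyP, scaledP, coeffP]
  | succ m ih =>
    refine mul_left_cancel₀ (C_ne_zero.2 (by positivity)) ((hrec m).trans ?_)
    rw [ih, polyP_succ]
end

section
/- For all natural numbers m and k with 0 ≤ k ≤ m, the identity 2^k (m+1) C(2m-2k+2, m-k+1) C(m+k+1, m+1) = 2^(k+1)(m+1) C(2m-2k+2, m-k+1) C(m+k-1, m) + 2^(k+1)(2m+1) C(2m-2k, m-k) C(m+k, m) + 2^(k+1)(k-1) C(2m-2k+2, m-k+1) C(m+k-1, m) - 2^(k+2) k C(2m-2k, m-k) C(m+k, m) holds. -/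
/-!
Write `m = n + k` and divide by `2 ^ k`. The central binomial recurrence
`(n + 1) C(2n+2, n+1) = 2 (2n+1) C(2n, n)` turns the `C(2n, n)` terms into multiples of
`C(2n+2, n+1)`, and the absorption identities `(m+1) C(m+k+1, m+1) = (m+k+1) C(m+k, m)` and
`(m+k) C(m+k-1, m) = k C(m+k, m)` make the remaining factors multiples of `C(m+k, m)`; the
coefficients then cancel.
-/

namespace Nat

theorem sub_one_choose_mul (n k : ℕ) : (n - 1).choose k * n = n.choose k * (n - k) := by
  cases n with
  | zero => simp
  | succ n => exact choose_mul_succ_eq n k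

theorem succ_mul_choose_two_mul_succ (n : ℕ) :
    (n + 1) * (2 * n + 2).choose (n + 1) = 2 * (2 * n + 1) * (2 * n).choose n :=
  succ_mul_centralBinom_succ n

end Nat

theorem coefficient_identity (m k : ℕ) (hk : k ≤ m) :
    (2:ℤ)^k * (m+1) * (Nat.choose (2*m - 2*k + 2) (m - k + 1)) * (Nat.choose (m+k+1) (m+1)) =
      (2:ℤ)^(k+1) * (m+1) * (Nat.choose (2*m - 2*k + 2) (m - k + 1)) * (Nat.choose (m+k-1) m)
      + (2:ℤ)^(k+1) * (2*m+1) * (Nat.choose (2*m - 2*k) (m - k)) * (Nat.choose (m+k) m)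
      + (2:ℤ)^(k+1) * ((k:ℤ) - 1) * (Nat.choose (2*m - 2*k + 2) (m - k + 1)) * (Nat.choose (m+k-1) m)
      - (2:ℤ)^(k+2) * k * (Nat.choose (2*m - 2*k) (m - k)) * (Nat.choose (m+k) m) := by
  obtain ⟨n, rfl⟩ : ∃ n, m = n + k := ⟨m - k, by omega⟩
  rw [show 2 * (n + k) - 2 * k = 2 * n by omega, Nat.add_sub_cancel]
  have central : ((n + 1 : ℕ) : ℤ) * (2 * n + 2).choose (n + 1) =
      2 * (2 * n + 1) * (2 * n).choose n := by
    exact_mod_cast Nat.succ_mul_choose_two_mul_succ n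
  have absorb_succ := Nat.add_one_mul_choose_eq (n + k + k) (n + k)
  have absorb_pred := Nat.sub_one_choose_mul (n + k + k) (n + k)
  rw [Nat.add_sub_cancel_left] at absorb_pred
  zify at absorb_succ absorb_pred
  push_cast at central absorb_succ absorb_pred ⊢
  linear_combination
    (2:ℤ) ^ k * (2 * n + 2).choose (n + 1) * (absorb_succ.symm - 2 * absorb_pred)
      + (2:ℤ) ^ k * (n + k + k).choose (n + k) * central
end

section
/- For m a natural number, a > -1 real, and b > 0 with b = 2/a^2 - 1 (i.e., 0 < a < 1), the quartic integral satisfies N_{0,4}(a;m) = (2^(m-1/2) / (m! · a^(2m+3/2))) · ∫_0^∞ t^m e^(-bt) K_{1/4}(t) dt, where K_{1/4} is the modified Bessel function of the second kind of order 1/4. -/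
/-!
Write `1 / P^(m+1) = (1/m!) ∫₀^∞ s^m e^{-sP} ds` for `P = x⁴ + 2ax² + 1` and exchange the two
integrals (Tonelli: everything is nonnegative). The inner integral is then a quartic Gaussian
`∫₀^∞ e^{-μx⁴ - 2νx²} dx`, which the substitution `x = √(2ν/μ) sinh (u/4)` turns into
`¼ √(2ν/μ) e^z K_{1/4}(z)` with `z = ν²/(2μ)`, because `μx⁴ + 2νx² = z (cosh u - 1)`.
Rescaling `t = a²s/2` gives the stated form: `e^{-s} e^{t} = e^{-bt}` is where
`b = 2/a² - 1` comes from.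
-/

open MeasureTheory Real

/-- The modified Bessel function of the second kind `K_ν(x)`, via its standard
integral representation (valid for `x > 0`). -/
noncomputable def besselK (ν x : ℝ) : ℝ :=
  ∫ t in Set.Ioi (0:ℝ), Real.exp (-x * Real.cosh t) * Real.cosh (ν * t)

open Set
open scoped Nat

lemma image_mul_sinh_div_four_Ioi {c : ℝ} (hc : 0 < c) :
    (fun u => c * sinh (u / 4)) '' Ioi 0 = Ioi 0 := by
  ext y
  simp only [mem_image, mem_Ioi]
  constructor
  · rintro ⟨u, hu, rfl⟩
    exact mul_pos hc (sinh_pos_iff.2 (by linarith))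
  · intro hy
    refine ⟨4 * arsinh (y / c), by linarith [arsinh_pos_iff.2 (div_pos hy hc)], ?_⟩
    rw [mul_div_cancel_left₀ _ four_ne_zero, sinh_arsinh]
    field_simp

lemma quartic_mul_sinh_div_four {μ ν c : ℝ} (hμ : μ ≠ 0) (hc : c ^ 2 = 2 * ν / μ) (u : ℝ) :
    μ * (c * sinh (u / 4)) ^ 4 + 2 * ν * (c * sinh (u / 4)) ^ 2 =
      ν ^ 2 / (2 * μ) * (cosh u - 1) := by
  have hcosh : cosh u - 1 = 8 * sinh (u / 4) ^ 2 * (1 + sinh (u / 4) ^ 2) := by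
    conv_lhs => rw [show u = 2 * (2 * (u / 4)) by ring]
    rw [cosh_two_mul, cosh_two_mul, sinh_two_mul]
    linear_combination (cosh (u / 4) ^ 2 + 7 * sinh (u / 4) ^ 2 + 1) * cosh_sq' (u / 4)
  rw [hcosh, show (c * sinh (u / 4)) ^ 4 = (c ^ 2) ^ 2 * sinh (u / 4) ^ 4 by ring,
    mul_pow, hc]
  field_simp
  ring

lemma integral_exp_neg_quartic {μ ν : ℝ} (hμ : 0 < μ) (hν : 0 < ν) :
    ∫ x in Ioi 0, exp (-(μ * x ^ 4) - 2 * ν * x ^ 2) =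
      1 / 4 * √(2 * ν / μ) * exp (ν ^ 2 / (2 * μ)) * besselK (1 / 4) (ν ^ 2 / (2 * μ)) := by
  set c := √(2 * ν / μ)
  set z := ν ^ 2 / (2 * μ)
  have hc : 0 < c := sqrt_pos.2 (by positivity)
  have hderiv : ∀ u ∈ Ioi (0 : ℝ), HasDerivWithinAt (fun u => c * sinh (u / 4))
      (c * (cosh (u / 4) * (1 / 4))) (Ioi 0) u := fun u _ =>
    (((hasDerivAt_id u).div_const 4).sinh.const_mul c).hasDerivWithinAt.congr_deriv (by simp)
  have hinj : InjOn (fun u => c * sinh (u / 4)) (Ioi 0) := fun x _ y _ h => by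
    simpa using sinh_injective (mul_left_cancel₀ hc.ne' h)
  rw [← image_mul_sinh_div_four_Ioi hc,
    integral_image_eq_integral_abs_deriv_smul measurableSet_Ioi hderiv hinj, besselK,
    ← integral_const_mul]
  refine setIntegral_congr_fun measurableSet_Ioi fun u _ => ?_
  have hexp :
      -(μ * (c * sinh (u / 4)) ^ 4) - 2 * ν * (c * sinh (u / 4)) ^ 2 = z + -z * cosh u := by
    have key : μ * (c * sinh (u / 4)) ^ 4 + 2 * ν * (c * sinh (u / 4)) ^ 2 = z * (cosh u - 1) :=
      quartic_mul_sinh_div_four hμ.ne' (sq_sqrt (by positivity)) u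
    linarith
  rw [smul_eq_mul, abs_of_nonneg (by positivity), hexp, exp_add, one_div_mul_eq_div 4 u]
  ring

lemma integral_pow_mul_exp_neg_mul_Ioi (n : ℕ) {A : ℝ} (hA : 0 < A) :
    ∫ s in Ioi 0, s ^ n * exp (-(A * s)) = n ! / A ^ (n + 1) := by
  have h := integral_rpow_mul_exp_neg_mul_Ioi (a := n + 1) (by positivity) hA
  rw [add_sub_cancel_right, Gamma_nat_eq_factorial, ← Nat.cast_succ, rpow_natCast,
    one_div_pow] at h
  simp_rw [rpow_natCast] at h
  rw [h, Nat.succ_eq_add_one, one_div_mul_eq_div]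

lemma integrableOn_pow_mul_exp_neg_mul_Ioi (n : ℕ) {A : ℝ} (hA : 0 < A) :
    IntegrableOn (fun s : ℝ => s ^ n * exp (-(A * s))) (Ioi 0) := by
  simpa using integrableOn_rpow_mul_exp_neg_mul_rpow (s := n) (p := 1)
    (neg_one_lt_zero.trans_le n.cast_nonneg) one_pos hA

lemma lintegral_pow_mul_exp_neg_mul_Ioi (n : ℕ) {A : ℝ} (hA : 0 < A) :
    ∫⁻ s in Ioi 0, ENNReal.ofReal (s ^ n * exp (-(A * s))) =
      ENNReal.ofReal (n !) * ENNReal.ofReal (1 / A ^ (n + 1)) := by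
  rw [← ofReal_integral_eq_lintegral_ofReal (integrableOn_pow_mul_exp_neg_mul_Ioi n hA)
    ((ae_restrict_mem measurableSet_Ioi).mono fun s (hs : 0 < s) => by positivity),
    integral_pow_mul_exp_neg_mul_Ioi n hA, ← ENNReal.ofReal_mul (by positivity), mul_one_div]

theorem integral_inv_pow_eq_integral_pow_mul_integral_exp {α : Type*} [MeasurableSpace α]
    {μ : Measure α} [SFinite μ] {P : α → ℝ} (hP : Measurable P) (hP_pos : ∀ x, 0 < P x)
    (hint : ∀ s > 0, Integrable (fun x => exp (-(P x * s))) μ) (m : ℕ) :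
    ∫ x, 1 / P x ^ (m + 1) ∂μ = (m ! : ℝ)⁻¹ * ∫ s in Ioi 0, s ^ m * ∫ x, exp (-(P x * s)) ∂μ := by
  have hswap : ENNReal.ofReal (m !) * ∫⁻ x, ENNReal.ofReal (1 / P x ^ (m + 1)) ∂μ =
      ∫⁻ s in Ioi 0, ENNReal.ofReal (s ^ m * ∫ x, exp (-(P x * s)) ∂μ) := by
    calc _ = ∫⁻ x, (∫⁻ s in Ioi 0, ENNReal.ofReal (s ^ m * exp (-(P x * s)))) ∂μ := by
          rw [← lintegral_const_mul _ (by fun_prop)]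
          exact lintegral_congr fun x => (lintegral_pow_mul_exp_neg_mul_Ioi m (hP_pos x)).symm
      _ = ∫⁻ s in Ioi 0, ∫⁻ x, ENNReal.ofReal (s ^ m * exp (-(P x * s))) ∂μ :=
          lintegral_lintegral_swap (Measurable.aemeasurable (by fun_prop))
      _ = _ := by
          refine setLIntegral_congr_fun measurableSet_Ioi fun s (hs : 0 < s) => ?_
          rw [← integral_const_mul, ofReal_integral_eq_lintegral_ofReal ((hint s hs).const_mul _)
            (.of_forall fun x => by positivity)]
  have hF : Measurable fun s => ∫ x, exp (-(P x * s)) ∂μ :=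
    (StronglyMeasurable.integral_prod_left (f := fun x (s : ℝ) => exp (-(P x * s)))
      (Measurable.stronglyMeasurable (by fun_prop))).measurable
  have hF_nonneg (s : ℝ) : 0 ≤ ∫ x, exp (-(P x * s)) ∂μ := integral_nonneg fun x => (exp_pos _).le
  rw [integral_eq_lintegral_of_nonneg_ae (.of_forall fun x => by have := hP_pos x; positivity)
      (by fun_prop : Measurable fun x => 1 / P x ^ (m + 1)).aestronglyMeasurable,
    integral_eq_lintegral_of_nonneg_ae ((ae_restrict_mem measurableSet_Ioi).mono
      fun s (hs : 0 < s) => by have := hF_nonneg s; positivity)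
      (by fun_prop : Measurable fun s : ℝ => s ^ m * ∫ x, exp (-(P x * s)) ∂μ).aestronglyMeasurable,
    ← hswap, ENNReal.toReal_mul, ENNReal.toReal_ofReal (by positivity), inv_mul_cancel_left₀
      (by positivity)]

section QuarticDenominator

variable {a : ℝ}

lemma integrable_exp_neg_quartic_mul (ha : 0 < a) {s : ℝ} (hs : 0 < s) :
    Integrable (fun x : ℝ => exp (-((x ^ 4 + 2 * a * x ^ 2 + 1) * s))) := by
  refine (integrable_exp_neg_mul_sq (by positivity : 0 < 2 * a * s)).mono' (by fun_prop)
    (.of_forall fun x => ?_)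
  rw [norm_of_nonneg (exp_pos _).le, exp_le_exp]
  nlinarith [pow_nonneg (sq_nonneg x) 2, mul_pos ha hs]

lemma integral_exp_neg_quartic_mul (ha : 0 < a) {s : ℝ} (hs : 0 < s) :
    ∫ x in Ioi 0, exp (-((x ^ 4 + 2 * a * x ^ 2 + 1) * s)) =
      1 / 4 * √(2 * a) * exp (-(2 / a ^ 2 - 1) * (a ^ 2 / 2 * s)) *
        besselK (1 / 4) (a ^ 2 / 2 * s) := by
  have hsplit (x : ℝ) : exp (-((x ^ 4 + 2 * a * x ^ 2 + 1) * s)) =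
      exp (-s) * exp (-(s * x ^ 4) - 2 * (a * s) * x ^ 2) := by
    rw [← exp_add]; ring_nf
  simp_rw [hsplit]
  rw [integral_const_mul, integral_exp_neg_quartic hs (mul_pos ha hs),
    show 2 * (a * s) / s = 2 * a by field_simp, show (a * s) ^ 2 / (2 * s) = a ^ 2 / 2 * s by
      field_simp,
    show -(2 / a ^ 2 - 1) * (a ^ 2 / 2 * s) = -s + a ^ 2 / 2 * s by field_simp; ring, exp_add]
  ring

lemma two_div_sq_pow_mul_sqrt (m : ℕ) (ha : 0 < a) :
    (2 / a ^ 2) ^ m * (1 / 4 * √(2 * a)) * (a ^ 2 / 2)⁻¹ =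
      (2 : ℝ) ^ ((m : ℝ) - 1 / 2) / a ^ (2 * (m : ℝ) + 3 / 2) := by
  rw [rpow_sub two_pos, rpow_natCast, ← sqrt_eq_rpow, rpow_add ha,
    show 2 * (m : ℝ) = ((2 * m : ℕ) : ℝ) by push_cast; ring, rpow_natCast,
    show (3 / 2 : ℝ) = 1 + 1 / 2 by norm_num, rpow_add ha, rpow_one, ← sqrt_eq_rpow,
    sqrt_mul zero_le_two, div_pow, pow_mul]
  have : 0 < √a := sqrt_pos.2 ha
  field_simp
  rw [sq_sqrt zero_le_two, sq_sqrt ha.le]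
  ring

end QuarticDenominator

theorem quartic_integral_via_besselK_general (m : ℕ) (a b : ℝ)
    (ha0 : 0 < a) (hb : b = 2 / a^2 - 1) :
    ∫ x in Set.Ioi (0:ℝ), 1 / (x^4 + 2*a*x^2 + 1)^(m+1) =
      (2:ℝ) ^ ((m:ℝ) - 1/2) / ((Nat.factorial m : ℝ) * a ^ (2*(m:ℝ) + 3/2)) *
        ∫ t in Set.Ioi (0:ℝ), t^m * Real.exp (-b*t) * besselK (1/4) t := by
  subst hb
  have hP_pos (x : ℝ) : 0 < x ^ 4 + 2 * a * x ^ 2 + 1 := by positivity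
  have hrescale : ∀ s ∈ Ioi (0 : ℝ),
      s ^ m * ∫ x in Ioi 0, exp (-((x ^ 4 + 2 * a * x ^ 2 + 1) * s)) =
        (2 / a ^ 2) ^ m * (1 / 4 * √(2 * a)) * ((a ^ 2 / 2 * s) ^ m *
          exp (-(2 / a ^ 2 - 1) * (a ^ 2 / 2 * s)) * besselK (1 / 4) (a ^ 2 / 2 * s)) :=
    fun s hs => by
      have hpow : (2 / a ^ 2) ^ m * (a ^ 2 / 2 * s) ^ m = s ^ m := by
        rw [← mul_pow, ← mul_assoc, div_mul_div_cancel₀ (by positivity), div_self two_ne_zero,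
          one_mul]
      rw [integral_exp_neg_quartic_mul ha0 hs, ← hpow]
      ring
  rw [integral_inv_pow_eq_integral_pow_mul_integral_exp (by fun_prop) hP_pos
      (fun s hs => (integrable_exp_neg_quartic_mul ha0 hs).restrict) m,
    setIntegral_congr_fun measurableSet_Ioi hrescale, integral_const_mul,
    integral_comp_mul_left_Ioi (fun t => t ^ m * exp (-(2 / a ^ 2 - 1) * t) * besselK (1 / 4) t)
      0 (by positivity : 0 < a ^ 2 / 2), mul_zero, smul_eq_mul, ← mul_assoc, ← mul_assoc,
    mul_assoc _ _ (a ^ 2 / 2)⁻¹, two_div_sq_pow_mul_sqrt m ha0]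
  ring

theorem quartic_integral_via_besselK (m : ℕ) (a b : ℝ)
    (ha0 : 0 < a) (ha1 : a < 1) (hb : b = 2 / a^2 - 1) :
    ∫ x in Set.Ioi (0:ℝ), 1 / (x^4 + 2*a*x^2 + 1)^(m+1) =
      (2:ℝ) ^ ((m:ℝ) - 1/2) / ((Nat.factorial m : ℝ) * a ^ (2*(m:ℝ) + 3/2)) *
        ∫ t in Set.Ioi (0:ℝ), t^m * Real.exp (-b*t) * besselK (1/4) t :=
  quartic_integral_via_besselK_general m a b ha0 hb
end

section
/- Define sequences of polynomials S_m(b), T_m(b) by S_0 = 1, T_0 = 0 and the recurrences S_{m+1}(b) = 2√2(2m+1) S_m(b) - (b+1)[4√2 S_m'(b) - (1+6m) T_m(b) + 4(b+1) T_m'(b)] and T_{m+1}(b) = 3(2m+1) S_m(b) + 4√2 m T_m(b) - 4(b+1)(S_m'(b) + √2 T_m'(b)). Then for every m ≥ 0 and every b > -1, d^m/db^m [ (b+1)^(-1/2) (√2 + √(b+1))^(-1/2) ] = (-1)^m (S_m(b) + √(b+1) T_m(b)) / (2^(2m) (b+1)^(m+1/2) (√2 + √(b+1))^(m+1/2)).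 -/
/-!
Write the `m`-th derivative as `(-1)^m N / (4^m u^r w^r)` with `u = b + 1`, `w = √2 + √u`,
`r = m + 1/2` and `N = S_m + √u T_m`. Since `u' = 1` and `w' = 1 / (2√u)`, the quotient rule gives
the same shape with exponent `r + 1` and numerator `-4 (N' u w - r N w - r N √u / 2)`, and expanding
this in powers of `√u` yields exactly `S_{m+1} + √u T_{m+1}`. That expansion is a polynomial
identity in which `√2` is an indeterminate, so the argument works for any constant `c ≥ 0` in its
place.
-/

open Polynomial Set Filter

noncomputable def closedForm (c : ℝ) (m : ℕ) (P Q : ℝ[X]) (y : ℝ) : ℝ :=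
  (-1) ^ m * (P.eval y + √(y + 1) * Q.eval y) /
    (2 ^ (2 * m) * (y + 1) ^ ((m : ℝ) + 1 / 2) * (c + √(y + 1)) ^ ((m : ℝ) + 1 / 2))

theorem closedForm_zero (c y : ℝ) :
    closedForm c 0 1 0 y = (√(y + 1))⁻¹ * (√(c + √(y + 1)))⁻¹ := by
  rw [closedForm, Real.sqrt_eq_rpow (c + √(y + 1)), Real.sqrt_eq_rpow (y + 1)]
  simp [mul_comm]

section Derivatives

variable {b : ℝ}

theorem hasDerivAt_sqrt_add_one (hb : -1 < b) :
    HasDerivAt (fun y => √(y + 1)) (1 / (2 * √(b + 1))) b :=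
  ((hasDerivAt_id b).add_const 1).sqrt (by simp; linarith)

theorem hasDerivAt_add_one_rpow (r : ℝ) (hb : -1 < b) :
    HasDerivAt (fun y => (y + 1) ^ r) (r * (b + 1) ^ (r - 1)) b := by
  simpa using ((hasDerivAt_id b).add_const 1).rpow_const (p := r) (Or.inl (by simp; linarith))

theorem hasDerivAt_const_add_sqrt_rpow {c : ℝ} (hc : 0 ≤ c) (r : ℝ) (hb : -1 < b) :
    HasDerivAt (fun y => (c + √(y + 1)) ^ r)
      (1 / (2 * √(b + 1)) * r * (c + √(b + 1)) ^ (r - 1)) b := by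
  have hpos : 0 < c + √(b + 1) := add_pos_of_nonneg_of_pos hc (Real.sqrt_pos.2 (by linarith))
  exact ((hasDerivAt_sqrt_add_one hb).const_add c).rpow_const (Or.inl hpos.ne')

theorem hasDerivAt_closedForm {c : ℝ} (hc : 0 ≤ c) (m : ℕ) {P Q P₁ Q₁ : ℝ[X]}
    (hP₁ : P₁ = C (2 * c * (2 * (m : ℝ) + 1)) * P -
      (X + 1) * (C (4 * c) * derivative P - C (1 + 6 * (m : ℝ)) * Q +
        C 4 * (X + 1) * derivative Q))
    (hQ₁ : Q₁ = C (3 * (2 * (m : ℝ) + 1)) * P + C (4 * c * (m : ℝ)) * Q -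
      C 4 * (X + 1) * (derivative P + C c * derivative Q))
    (hb : -1 < b) :
    HasDerivAt (closedForm c m P Q) (closedForm c (m + 1) P₁ Q₁ b) b := by
  set s := √(b + 1) with hs_def
  set r : ℝ := (m : ℝ) + 1 / 2
  have hu : 0 < b + 1 := by linarith
  have hs : 0 < s := Real.sqrt_pos.2 hu
  have hcs : 0 < c + s := by positivity
  have hs_sq : b + 1 = s ^ 2 := (Real.sq_sqrt hu.le).symm
  have hnum := ((P.hasDerivAt b).add ((hasDerivAt_sqrt_add_one hb).mul (Q.hasDerivAt b))).const_mul
    ((-1 : ℝ) ^ m)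
  have hden := ((hasDerivAt_add_one_rpow r hb).const_mul ((2 : ℝ) ^ (2 * m))).mul
    (hasDerivAt_const_add_sqrt_rpow hc r hb)
  have hden0 : (2 : ℝ) ^ (2 * m) * (b + 1) ^ r * (c + s) ^ r ≠ 0 := by positivity
  refine (hnum.div hden hden0).congr_deriv ?_
  simp only [closedForm, hP₁, hQ₁, Pi.add_apply, Pi.mul_apply, eval_mul, eval_add, eval_sub, eval_C, eval_X, eval_one]
  push_cast
  rw [show (m : ℝ) + 1 + 1 / 2 = r + 1 by ring, Real.rpow_add_one hu.ne', Real.rpow_add_one hcs.ne',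
    Real.rpow_sub_one hu.ne', Real.rpow_sub_one hcs.ne', mul_add, pow_add, ← hs_def, hs_sq]
  have hA : (s ^ 2) ^ r ≠ 0 := by positivity
  have hW : (c + s) ^ r ≠ 0 := by positivity
  field_simp
  ring

end Derivatives

theorem derivative_formula_ST (S T : ℕ → Polynomial ℝ)
    (hS0 : S 0 = 1) (hT0 : T 0 = 0)
    (hSrec : ∀ m : ℕ, S (m+1) =
        C (2 * Real.sqrt 2 * (2*(m:ℝ)+1)) * S m -
          (X + 1) * (C (4 * Real.sqrt 2) * derivative (S m) -
            C (1 + 6*(m:ℝ)) * T m + C 4 * (X + 1) * derivative (T m)))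
    (hTrec : ∀ m : ℕ, T (m+1) =
        C (3*(2*(m:ℝ)+1)) * S m + C (4 * Real.sqrt 2 * (m:ℝ)) * T m -
          C 4 * (X + 1) * (derivative (S m) + C (Real.sqrt 2) * derivative (T m))) :
    ∀ m : ℕ, ∀ b : ℝ, -1 < b →
      iteratedDeriv m
          (fun y : ℝ => (Real.sqrt (y+1))⁻¹ * (Real.sqrt (Real.sqrt 2 + Real.sqrt (y+1)))⁻¹) b =
        (-1)^m * ((S m).eval b + Real.sqrt (b+1) * (T m).eval b) /
          ((2:ℝ)^(2*m) * (b+1) ^ ((m:ℝ) + 1/2) *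
            (Real.sqrt 2 + Real.sqrt (b+1)) ^ ((m:ℝ) + 1/2)) := by
  have key : ∀ m : ℕ, EqOn
      (iteratedDeriv m fun y : ℝ => (√(y + 1))⁻¹ * (√(√2 + √(y + 1)))⁻¹)
      (closedForm √2 m (S m) (T m)) (Ioi (-1)) := by
    intro m
    induction m with
    | zero =>
      intro y _
      rw [iteratedDeriv_zero, hS0, hT0, closedForm_zero]
    | succ m ih =>
      intro b hb
      rw [iteratedDeriv_succ, (ih.eventuallyEq_of_mem (Ioi_mem_nhds hb)).deriv_eq]
      exact (hasDerivAt_closedForm (Real.sqrt_nonneg 2) m (hSrec m) (hTrec m) hb).deriv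
  exact fun m b hb => key m hb
end

section
/- For q_1, ..., q_n distinct positive reals, (2/π) ∫_0^∞ Π_{k=1}^n 1/(x² + q_k²) dx = s_{λ(n-1)}(q) / (e_n(q) · s_{λ(n)}(q)), where λ(s) = (s-1, s-2, ..., 1, 0) is the staircase partition, e_n(q) = q_1 q_2 ⋯ q_n, and s_μ denotes the Schur polynomial in the variables q_1, ..., q_n. -/
/-!
With `r k = q k ^ 2` and the Lagrange nodal weights `w k = ∏_{j ≠ k} (r j - r k)⁻¹`, partial
fractions give `∏ k, (x² + r k)⁻¹ = ∑ k, w k (x² + r k)⁻¹`, and `∫₀^∞ (x² + a²)⁻¹ = π / (2a)`, so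
the left-hand side is `∑ k, w k / q k`.

On the right, pulling `q i` out of row `i` of the numerator matrix leaves the columns
`r^(n-2), …, r, 1, 1/q`: a reversed Vandermonde matrix in `r` whose top power has been replaced by
`1/q`. Cramer's rule, applied to the coefficients of the Lagrange interpolant of `1/q` at the
nodes `r`, identifies its ratio to the Vandermonde determinant with the leading coefficient of that
interpolant, which is again `∑ k, w k / q k` up to sign.
-/

open MeasureTheory
open Finset Polynomial Matrix Function

namespace Lagrange

variable {F ι : Type*} [Field F] [DecidableEq ι] {s : Finset ι} {v : ι → F}

theorem prod_inv_sub_eq_sum_nodalWeight_mul (hvs : Set.InjOn v s) (hs : s.Nonempty) {x : F}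
    (hx : ∀ i ∈ s, x ≠ v i) :
    ∏ i ∈ s, (x - v i)⁻¹ = ∑ i ∈ s, nodalWeight s v i * (x - v i)⁻¹ := by
  have h := eval_interpolate_not_at_node (1 : ι → F) hx
  simp only [interpolate_one hvs hs, eval_one, Pi.one_apply, mul_one, eval_nodal] at h
  rw [prod_inv_distrib]
  exact inv_eq_of_mul_eq_one_right h.symm

theorem nodalWeight_neg {i : ι} (hi : i ∈ s) :
    nodalWeight s (fun j => -v j) i = (-1) ^ (#s - 1) * nodalWeight s v i := by
  rw [nodalWeight, nodalWeight, ← card_erase_of_mem hi, ← prod_const, ← prod_mul_distrib]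
  refine prod_congr rfl fun j _ => ?_
  rw [neg_sub_neg, ← neg_sub, inv_neg, neg_one_mul]

theorem coeff_interpolate_card_sub_one (hvs : Set.InjOn v s) (r : ι → F) :
    (interpolate s v r).coeff (#s - 1) = ∑ i ∈ s, nodalWeight s v i * r i := by
  rw [coeff_eq_sum hvs (degree_interpolate_lt r hvs)]
  refine sum_congr rfl fun i hi => ?_
  rw [eval_interpolate_at_node r hvs hi, nodalWeight, prod_inv_distrib, div_eq_mul_inv, mul_comm]

end Lagrange

namespace Matrix

section CommRing

variable {R : Type*} [CommRing R]

theorem det_updateCol_mulVec {n : Type*} [Fintype n] [DecidableEq n] (A : Matrix n n R)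
    (x : n → R) (i : n) : (A.updateCol i (A *ᵥ x)).det = A.det * x i := by
  rw [← cramer_apply, cramer_eq_adjugate_mulVec, mulVec_mulVec, adjugate_mul, smul_mulVec,
    one_mulVec, Pi.smul_apply, smul_eq_mul]

theorem vandermonde_mulVec_coeff {n : ℕ} (v : Fin n → R) {P : R[X]} (hP : P.degree < n) :
    vandermonde v *ᵥ (fun j => P.coeff j) = fun i => P.eval (v i) := by
  rcases eq_or_ne P 0 with rfl | hP0
  · ext; simp [mulVec, dotProduct]
  funext i
  rw [eval_eq_sum_range' ((natDegree_lt_iff_degree_lt hP0).mpr hP), mulVec, dotProduct,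
    ← Fin.sum_univ_eq_sum_range]
  simp only [vandermonde_apply, mul_comm]

theorem of_pow_rev_eq_submatrix_vandermonde {n : ℕ} (v : Fin n → R) :
    (of fun i j : Fin n => v i ^ (n - 1 - (j : ℕ))) = (vandermonde v).submatrix id Fin.revPerm := by
  ext i j
  simp only [of_apply, submatrix_apply, id_eq, Fin.revPerm_apply, vandermonde_apply, Fin.val_rev]
  congr 1
  omega

theorem det_of_pow_rev_ne_zero [IsDomain R] {n : ℕ} {v : Fin n → R} (hv : Injective v) :
    (of fun i j : Fin n => v i ^ (n - 1 - (j : ℕ))).det ≠ 0 := by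
  rw [of_pow_rev_eq_submatrix_vandermonde, det_permute']
  refine mul_ne_zero ?_ (det_vandermonde_ne_zero_iff.mpr hv)
  rcases Int.units_eq_one_or (Equiv.Perm.sign (@Fin.revPerm n)) with h | h <;> simp [h]

end CommRing

variable {K : Type*} [Field K] {m : ℕ}

theorem det_vandermonde_updateCol_last {v : Fin (m + 1) → K} (hv : Injective v)
    (g : Fin (m + 1) → K) :
    ((vandermonde v).updateCol (Fin.last m) g).det =
      (vandermonde v).det * ∑ i, Lagrange.nodalWeight univ v i * g i := by
  have hvs : Set.InjOn v (univ : Finset (Fin (m + 1))) := hv.injOn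
  set P := Lagrange.interpolate univ v g
  have hP : vandermonde v *ᵥ (fun j => P.coeff j) = g := by
    rw [vandermonde_mulVec_coeff v ((Lagrange.degree_interpolate_lt g hvs).trans_eq (by simp))]
    exact funext fun i => Lagrange.eval_interpolate_at_node g hvs (mem_univ i)
  calc ((vandermonde v).updateCol (Fin.last m) g).det
      = (vandermonde v).det * P.coeff (#(univ : Finset (Fin (m + 1))) - 1) := by
        conv_lhs => rw [← hP, det_updateCol_mulVec]
        simp
    _ = _ := by rw [Lagrange.coeff_interpolate_card_sub_one hvs]

theorem det_of_pow_rev_lastCol {v : Fin (m + 1) → K} (hv : Injective v) (g : Fin (m + 1) → K) :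
    (of fun i j : Fin (m + 1) => if j = Fin.last m then g i else v i ^ (m - 1 - (j : ℕ))).det =
      (-1) ^ m * (of fun i j : Fin (m + 1) => v i ^ (m + 1 - 1 - (j : ℕ))).det *
        ∑ i, Lagrange.nodalWeight univ v i * g i := by
  have hM : (of fun i j : Fin (m + 1) => if j = Fin.last m then g i else v i ^ (m - 1 - (j : ℕ))) =
      ((vandermonde v).updateCol (Fin.last m) g).submatrix id
        ((finRotate (m + 1)).trans Fin.revPerm) := by
    ext i j
    refine Fin.lastCases ?_ (fun j => ?_) j
    · simp
    · simp [Fin.rev_succ, (Fin.castSucc_lt_last _).ne, Fin.val_rev, Nat.sub_sub, add_comm]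
  rw [hM, det_permute', det_vandermonde_updateCol_last hv, of_pow_rev_eq_submatrix_vandermonde,
    det_permute', Equiv.Perm.sign_trans, sign_finRotate]
  push_cast
  ring

theorem det_of_pow_staircase {q : Fin (m + 1) → K} (hq : ∀ i, q i ≠ 0) :
    (of fun i j : Fin (m + 1) => q i ^ ((m + 1 - 2 - (j : ℕ)) + (m + 1 - 1 - (j : ℕ)))).det =
      (∏ i, q i) *
        (of fun i j : Fin (m + 1) =>
          if j = Fin.last m then (q i)⁻¹ else (q i ^ 2) ^ (m - 1 - (j : ℕ))).det := by
  rw [← det_mul_column]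
  congr 1
  ext i j
  refine Fin.lastCases ?_ (fun j => ?_) j
  -- in the last column both truncated exponents vanish, and `q i ^ 0 = q i * (q i)⁻¹`
  · simp [hq i]
  · simp only [of_apply, (Fin.castSucc_lt_last j).ne, if_false, Fin.val_castSucc]
    rw [← pow_mul, ← pow_succ']
    congr 1
    omega

end Matrix

open Real Set

theorem inv_sq_add_sq_eq_mul_inv_one_add_sq {a : ℝ} (ha : a ≠ 0) (x : ℝ) :
    (x ^ 2 + a ^ 2)⁻¹ = a⁻¹ * a⁻¹ * (1 + (a⁻¹ * x) ^ 2)⁻¹ := by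
  field_simp
  ring

theorem integrableOn_Ioi_inv_sq_add_sq {a : ℝ} (ha : 0 < a) :
    IntegrableOn (fun x : ℝ => (x ^ 2 + a ^ 2)⁻¹) (Ioi 0) := by
  simp_rw [inv_sq_add_sq_eq_mul_inv_one_add_sq ha.ne']
  refine Integrable.const_mul ?_ _
  exact (integrableOn_Ioi_comp_mul_left_iff (fun y => (1 + y ^ 2)⁻¹) 0 (inv_pos.mpr ha)).mpr
    integrable_inv_one_add_sq.integrableOn

theorem integral_Ioi_inv_sq_add_sq {a : ℝ} (ha : 0 < a) :
    ∫ x in Ioi 0, (x ^ 2 + a ^ 2)⁻¹ = π / (2 * a) := by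
  simp_rw [inv_sq_add_sq_eq_mul_inv_one_add_sq ha.ne']
  rw [integral_const_mul, integral_comp_mul_left_Ioi (fun y => (1 + y ^ 2)⁻¹) 0 (inv_pos.mpr ha)]
  simp only [mul_zero, integral_Ioi_inv_one_add_sq, arctan_zero, sub_zero, smul_eq_mul, inv_inv]
  field_simp

theorem two_div_pi_mul_integral_Ioi_prod_inv_sq_add_sq {ι : Type*} [Fintype ι] [DecidableEq ι]
    [Nonempty ι] {q : ι → ℝ} (hq : ∀ i, 0 < q i) (hsq : Injective fun i => q i ^ 2) :
    2 / π * ∫ x in Ioi 0, ∏ k, (x ^ 2 + q k ^ 2)⁻¹ =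
      ∑ k, Lagrange.nodalWeight univ (fun j => -q j ^ 2) k * (q k)⁻¹ := by
  have hpf (x : ℝ) : ∏ k, (x ^ 2 + q k ^ 2)⁻¹ =
      ∑ k, Lagrange.nodalWeight univ (fun j => -q j ^ 2) k * (x ^ 2 + q k ^ 2)⁻¹ := by
    have hx : ∀ i ∈ (univ : Finset ι), x ^ 2 ≠ -q i ^ 2 := fun i _ => by
      nlinarith [hq i, sq_nonneg x]
    simpa only [sub_neg_eq_add] using Lagrange.prod_inv_sub_eq_sum_nodalWeight_mul
      (v := fun j => -q j ^ 2) (fun i _ j _ h => hsq (neg_injective h)) univ_nonempty hx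
  simp_rw [hpf]
  rw [integral_finsetSum _ fun k _ => (integrableOn_Ioi_inv_sq_add_sq (hq k)).const_mul _,
    mul_sum]
  refine sum_congr rfl fun k _ => ?_
  rw [integral_const_mul, integral_Ioi_inv_sq_add_sq (hq k)]
  field_simp [(hq k).ne']

theorem rational_integral_schur (n : ℕ) (hn : 1 ≤ n) (q : Fin n → ℝ)
    (hq : ∀ i, 0 < q i) (hdist : Function.Injective q) :
    (2 / Real.pi) * ∫ x in Set.Ioi (0:ℝ), ∏ k, (x^2 + (q k)^2)⁻¹ =
      (Matrix.det (Matrix.of fun i j : Fin n => q i ^ ((n - 2 - (j:ℕ)) + (n - 1 - (j:ℕ)))) /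
          Matrix.det (Matrix.of fun i j : Fin n => q i ^ (n - 1 - (j:ℕ)))) /
        ((∏ i, q i) *
          (Matrix.det (Matrix.of fun i j : Fin n => q i ^ (2 * (n - 1 - (j:ℕ)))) /
            Matrix.det (Matrix.of fun i j : Fin n => q i ^ (n - 1 - (j:ℕ))))) := by
  obtain ⟨m, rfl⟩ := Nat.exists_eq_add_of_le' hn
  have hq0 : ∀ i, q i ≠ 0 := fun i => (hq i).ne'
  have hsq : Injective fun i => q i ^ 2 := fun i j h =>
    hdist ((pow_left_inj₀ (hq i).le (hq j).le two_ne_zero).mp h)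
  simp_rw [pow_mul]
  rw [two_div_pi_mul_integral_Ioi_prod_inv_sq_add_sq hq hsq, det_of_pow_staircase hq0,
    det_of_pow_rev_lastCol hsq]
  simp only [Lagrange.nodalWeight_neg (mem_univ _), card_univ, Fintype.card_fin,
    Nat.add_sub_cancel, mul_assoc, ← mul_sum]
  have hV : (of fun i j : Fin (m + 1) => q i ^ (m - (j : ℕ))).det ≠ 0 :=
    det_of_pow_rev_ne_zero hdist
  have hB : (of fun i j : Fin (m + 1) => (q i ^ 2) ^ (m - (j : ℕ))).det ≠ 0 :=
    det_of_pow_rev_ne_zero hsq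
  field_simp [prod_ne_zero_iff.mpr fun i _ => hq0 i]
end
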